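/- arXiv:2011.14549 — 11 statements merged into one kernel-verified Lean document; each statement's English description precedes it below -/
import Mathlib

section
/- Let X ∈ ℝ^{n×p} (p ≥ 1) have columns x₁,…,xₚ each of Euclidean norm 1, let y ∈ ℝⁿ be a nonzero vector in the column space of X, and let η > 0 satisfy η < 2‖y‖₂ − 2·max_{i∈[p]} ⟨y, xᵢ⟩. Let T be the convex cone {Σ_{i=1}^p λᵢ·(xᵢ − y/‖y‖₂) : λᵢ ≥ 0}, and let I ⊆ [p] be a set of indices such that every i ∈ [p] for which xᵢ − y/‖y‖₂ generates an extreme ray of T belongs to I. Then for every global minimizer β* of β ↦ ‖Xβ − y‖₂² + η·Σ_{i=1}^p βᵢ over the nonnegative orthant {β ∈ ℝᵖ : βᵢ ≥ 0 for all i}, one has βᵢ* = 0 for every i ∉ I. -/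
open Finset RealInnerProductSpace

noncomputable section

lemma unit_inner_eq {F : Type*} [NormedAddCommGroup F] [InnerProductSpace ℝ F]
    {a b : F} (ha : ‖a‖ = 1) (hb : ‖b‖ = 1) (h : ⟪a, b⟫ = 1) : a = b := by
  have h2 : ‖a - b‖ ^ 2 = 0 := by
    rw [norm_sub_sq_real, ha, hb, h]; ring
  have h3 : ‖a - b‖ = 0 := by nlinarith [norm_nonneg (a - b)]
  exact sub_eq_zero.mp (norm_eq_zero.mp h3)

lemma quad_nonneg_zero {b a : ℝ} (hb : 0 < b)
    (key : ∀ t : ℝ, -b ≤ t → 0 ≤ t * a + t ^ 2) : a = 0 := by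
  rcases lt_trichotomy a 0 with h | h | h
  · exfalso
    have ht0 : 0 < min b (-a / 2) := lt_min hb (by linarith)
    have hk := key (min b (-a / 2)) (by linarith)
    have h2 : min b (-a / 2) * min b (-a / 2) ≤ min b (-a / 2) * (-a / 2) :=
      mul_le_mul_of_nonneg_left (min_le_right _ _) ht0.le
    nlinarith [mul_neg_of_pos_of_neg ht0 h]
  · exact h
  · exfalso
    have ht0 : 0 < min b (a / 2) := lt_min hb (by linarith)
    have hk := key (-(min b (a / 2))) (by linarith [min_le_left b (a / 2)])
    have h2 : min b (a / 2) * min b (a / 2) ≤ min b (a / 2) * (a / 2) :=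
      mul_le_mul_of_nonneg_left (min_le_right _ _) ht0.le
    nlinarith [mul_pos ht0 h]

/-- A nonzero vector `w` generates an extreme ray of the convex cone `T` if `w ∈ T` and
whenever `w = w₁ + w₂` with `w₁, w₂ ∈ T`, both `w₁` and `w₂` are nonnegative multiples of `w`. -/
def GeneratesExtremeRay {E : Type*} [AddCommGroup E] [Module ℝ E]
    (T : Set E) (w : E) : Prop :=
  w ≠ 0 ∧ w ∈ T ∧ ∀ w₁ w₂, w₁ ∈ T → w₂ ∈ T → w = w₁ + w₂ →
    (∃ c : ℝ, 0 ≤ c ∧ w₁ = c • w) ∧ (∃ c : ℝ, 0 ≤ c ∧ w₂ = c • w)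

set_option maxHeartbeats 1000000 in
theorem stmt0 {n p : ℕ} (hp : 0 < p)
    (x : Fin p → EuclideanSpace ℝ (Fin n)) (y : EuclideanSpace ℝ (Fin n))
    (hxnorm : ∀ i, ‖x i‖ = 1)
    (hy0 : y ≠ 0)
    (hycol : ∃ c : Fin p → ℝ, y = ∑ i, c i • x i)
    (η : ℝ) (hη0 : 0 < η)
    (hη : η < 2 * ‖y‖ - 2 * Finset.univ.sup'
      (Finset.univ_nonempty_iff.mpr ⟨⟨0, hp⟩⟩) (fun i => ⟪y, x i⟫))
    (T : Set (EuclideanSpace ℝ (Fin n)))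
    (hT : T = {v | ∃ lam : Fin p → ℝ, (∀ i, 0 ≤ lam i) ∧
      v = ∑ i, lam i • (x i - ‖y‖⁻¹ • y)})
    (I : Set (Fin p))
    (hI : ∀ i, GeneratesExtremeRay T (x i - ‖y‖⁻¹ • y) → i ∈ I)
    (β : Fin p → ℝ) (hβ : ∀ i, 0 ≤ β i)
    (hmin : ∀ γ : Fin p → ℝ, (∀ i, 0 ≤ γ i) →
      ‖(∑ i, β i • x i) - y‖ ^ 2 + η * ∑ i, β i ≤
        ‖(∑ i, γ i • x i) - y‖ ^ 2 + η * ∑ i, γ i) :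
    ∀ i, i ∉ I → β i = 0 := by
  intro i hiI
  by_contra hne
  have hβi : 0 < β i := lt_of_le_of_ne (hβ i) (Ne.symm hne)
  have hr : 0 < ‖y‖ := norm_pos_iff.mpr hy0
  set u : EuclideanSpace ℝ (Fin n) := ‖y‖⁻¹ • y with hudef
  set r : ℝ := ‖y‖ with hrdef
  have hu1 : ‖u‖ = 1 := by
    rw [hudef, norm_smul, norm_inv, norm_norm]
    exact inv_mul_cancel₀ (ne_of_gt hr)
  have hyu : r • u = y := smul_inv_smul₀ (ne_of_gt hr) y
  have huu : ⟪u, u⟫ = 1 := by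
    rw [real_inner_self_eq_norm_sq, hu1]; norm_num
  set g : EuclideanSpace ℝ (Fin n) := ∑ j, β j • x j with hg
  set R : EuclideanSpace ℝ (Fin n) := g - y with hR
  set s : ℝ := ∑ j, β j with hs
  have hs_ge : β i ≤ s := Finset.single_le_sum (fun j _ => hβ j) (mem_univ i)
  have hs_pos : 0 < s := lt_of_lt_of_le hβi hs_ge
  have hsup : ∀ j, ⟪y, x j⟫ < r - η / 2 := by
    intro j
    have h1 := Finset.le_sup' (fun k => ⟪y, x k⟫) (mem_univ j)
    linarith
  have hwine : x i - u ≠ 0 := by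
    intro h
    have hxu : x i = u := sub_eq_zero.mp h
    have h2 : ⟪y, x i⟫ = r := by
      rw [hxu, hudef, real_inner_smul_right, real_inner_self_eq_norm_sq]
      field_simp
      ring
    have := hsup i
    linarith
  -- KKT stationarity on the support
  have hkkt : ∀ j, 0 < β j → ⟪R, x j⟫ = -(η / 2) := by
    intro j hj
    have key : ∀ t : ℝ, -β j ≤ t → 0 ≤ t * (2 * ⟪R, x j⟫ + η) + t ^ 2 := by
      intro t ht
      have hfeas : ∀ k, 0 ≤ β k + if k = j then t else 0 := by
        intro k
        by_cases hk : k = j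
        · subst hk; rw [if_pos rfl]; linarith
        · rw [if_neg hk, add_zero]; exact hβ k
      have hmain := hmin (fun k => β k + if k = j then t else 0) hfeas
      have h1 : (∑ k, (β k + if k = j then t else 0) • x k) = g + t • x j := by
        rw [hg]
        simp [add_smul, ite_smul, Finset.sum_add_distrib]
      have h2 : (∑ k, (β k + if k = j then t else 0)) = s + t := by
        rw [hs]; simp [Finset.sum_add_distrib]
      simp only [h1, h2] at hmain
      have h3 : g + t • x j - y = R + t • x j := by rw [hR]; abel
      rw [h3] at hmain
      have h4 : ‖R + t • x j‖ ^ 2 = ‖R‖ ^ 2 + 2 * (t * ⟪R, x j⟫) + t ^ 2 := by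
        rw [norm_add_sq_real, real_inner_smul_right, norm_smul, hxnorm j, mul_one,
          Real.norm_eq_abs, sq_abs]
      rw [h4] at hmain
      linarith
    have ha := quad_nonneg_zero hj key
    linarith
  have hRxi : ⟪R, x i⟫ = -(η / 2) := hkkt i hβi
  set κ : ℝ := ⟪R, x i - u⟫ with hκdef
  have hRu : ⟪R, u⟫ = -(η / 2) - κ := by
    have h1 : κ = ⟪R, x i⟫ - ⟪R, u⟫ := by rw [hκdef, inner_sub_right]
    linarith
  have hRw : ∀ j, 0 < β j → ⟪R, x j - u⟫ = κ := by
    intro j hj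
    rw [inner_sub_right, hkkt j hj, hRu]; ring
  set v : EuclideanSpace ℝ (Fin n) := ∑ j, β j • (x j - u) with hvdef
  have hRv2 : R = v + (s - r) • u := by
    rw [hvdef]
    simp only [smul_sub, Finset.sum_sub_distrib, ← Finset.sum_smul, ← hs, ← hg]
    rw [hR, ← hyu, sub_smul]
    abel
  have hRvκ : ⟪R, v⟫ = κ * s := by
    rw [hvdef, inner_sum]
    have h1 : ∀ j ∈ univ, ⟪R, β j • (x j - u)⟫ = κ * β j := by
      intro j _
      rw [real_inner_smul_right]
      rcases eq_or_lt_of_le (hβ j) with h0 | h0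
      · rw [← h0]; ring
      · rw [hRw j h0]; ring
    rw [Finset.sum_congr rfl h1, ← Finset.mul_sum, hs]
  have hκpos : 0 < κ := by
    rcases le_or_gt r s with hsr | hsr
    · have hRne : R ≠ 0 := by
        intro h; rw [h, inner_zero_left] at hRxi; linarith
      have hRR : 0 < ⟪R, R⟫ :=
        lt_of_le_of_ne real_inner_self_nonneg
          (fun h => hRne (inner_self_eq_zero.mp h.symm))
      have hexp : ⟪R, R⟫ = κ * s + (s - r) * ⟪R, u⟫ := by
        nth_rewrite 2 [hRv2]
        rw [inner_add_right, real_inner_smul_right, hRvκ]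
      rw [hRu] at hexp
      nlinarith [hr, hη0]
    · have huwj : ∀ j, ⟪u, x j - u⟫ = -(β j * 0 + ‖x j - u‖ ^ 2 / 2) := by
        intro j
        have h1 : ‖x j - u‖ ^ 2 = 1 - 2 * ⟪x j, u⟫ + 1 := by
          rw [norm_sub_sq_real, hxnorm j, hu1]; ring
        rw [inner_sub_right, huu, real_inner_comm]
        linarith
      have huv : ⟪u, v⟫ = -∑ j, β j * (‖x j - u‖ ^ 2 / 2) := by
        rw [hvdef, inner_sum, ← Finset.sum_neg_distrib]
        refine Finset.sum_congr rfl (fun j _ => ?_)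
        rw [real_inner_smul_right, huwj j]
        ring
      have hterm : β i * (‖x i - u‖ ^ 2 / 2) ≤ ∑ j, β j * (‖x j - u‖ ^ 2 / 2) :=
        Finset.single_le_sum (f := fun j => β j * (‖x j - u‖ ^ 2 / 2))
          (fun j _ => mul_nonneg (hβ j) (by positivity)) (mem_univ i)
      have hwipos : 0 < ‖x i - u‖ ^ 2 := by
        have := norm_pos_iff.mpr hwine
        positivity
      have hexp : κ * s = ⟪v, v⟫ + (s - r) * ⟪u, v⟫ := by
        rw [← hRvκ]
        nth_rewrite 1 [hRv2]
        rw [inner_add_left, real_inner_smul_left]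
      rw [huv] at hexp
      have hvv : (0:ℝ) ≤ ⟪v, v⟫ := real_inner_self_nonneg
      have hκs : 0 < κ * s := by nlinarith [mul_pos hβi hwipos]
      by_contra hcon
      push_neg at hcon
      nlinarith
  -- x i - u generates an extreme ray of T
  have hwiT : x i - u ∈ T := by
    rw [hT]
    refine ⟨fun j => if j = i then 1 else 0, fun j => by dsimp only; split <;> norm_num, ?_⟩
    simp [ite_smul]
  refine hiI (hI i ⟨hwine, hwiT, ?_⟩)
  intro w₁ w₂ hw₁ hw₂ hsum12
  rw [hT] at hw₁ hw₂
  obtain ⟨μ, hμ0, hμ⟩ := hw₁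
  obtain ⟨ν, hν0, hν⟩ := hw₂
  set lam : Fin p → ℝ := fun j => μ j + ν j with hlamdef
  have hlam0 : ∀ j, 0 ≤ lam j := fun j => add_nonneg (hμ0 j) (hν0 j)
  set m : ℝ := ∑ j, lam j with hmdef
  have hwirep : x i - u = ∑ j, lam j • (x j - u) := by
    rw [hsum12, hμ, hν, ← Finset.sum_add_distrib]
    exact Finset.sum_congr rfl (fun j _ => (add_smul (μ j) (ν j) _).symm)
  have hxrep : ∑ j, lam j • x j = x i + (m - 1) • u := by
    have h1 : ∑ j, lam j • (x j - u) = ∑ j, lam j • x j - m • u := by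
      simp only [smul_sub, Finset.sum_sub_distrib, ← Finset.sum_smul, ← hmdef]
    rw [h1] at hwirep
    rw [sub_smul, one_smul]
    have := hwirep
    rw [eq_sub_iff_add_eq] at this
    rw [← this]
    abel
  -- total weight is at most 1
  have hm1 : m ≤ 1 := by
    by_contra hm
    push_neg at hm
    set t : ℝ := min (β i) (κ / (m - 1)) with htdef
    have ht0 : 0 < t := lt_min hβi (div_pos hκpos (by linarith))
    have htβ : t ≤ β i := min_le_left _ _
    have htκ : t * (m - 1) ≤ κ := by
      have h1 := min_le_right (β i) (κ / (m - 1))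
      have h2 : 0 < m - 1 := by linarith
      calc t * (m - 1) ≤ (κ / (m - 1)) * (m - 1) := by
            exact mul_le_mul_of_nonneg_right h1 h2.le
        _ = κ := by field_simp
    have hfeas : ∀ k, 0 ≤ β k + t * (lam k - if k = i then 1 else 0) := by
      intro k
      by_cases hk : k = i
      · subst hk
        rw [if_pos rfl]
        nlinarith [hlam0 k, hβ k]
      · rw [if_neg hk, sub_zero]
        have := hlam0 k
        nlinarith [hβ k]
    have hmain := hmin (fun k => β k + t * (lam k - if k = i then 1 else 0)) hfeas
    have h1 : (∑ k, (β k + t * (lam k - if k = i then 1 else 0)) • x k)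
        = g + (t * (m - 1)) • u := by
      simp only [add_smul, Finset.sum_add_distrib, ← hg]
      congr 1
      have he : ∀ k ∈ univ, (t * (lam k - if k = i then 1 else 0)) • x k
          = t • (lam k • x k) - t • ((if k = i then (1:ℝ) else 0) • x k) := by
        intro k _
        rw [mul_sub, sub_smul, mul_smul, mul_smul]
      rw [Finset.sum_congr rfl he, Finset.sum_sub_distrib, ← Finset.smul_sum, ← Finset.smul_sum,
        hxrep]
      have h2 : ∑ k, (if k = i then (1:ℝ) else 0) • x k = x i := by simp [ite_smul]
      rw [h2, smul_add, smul_smul]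
      abel
    have h2 : (∑ k, (β k + t * (lam k - if k = i then 1 else 0))) = s + t * (m - 1) := by
      rw [Finset.sum_add_distrib, ← hs, ← Finset.mul_sum]
      congr 2
      rw [Finset.sum_sub_distrib, ← hmdef]
      simp
    simp only [h1, h2] at hmain
    have h3 : g + (t * (m - 1)) • u - y = R + (t * (m - 1)) • u := by rw [hR]; abel
    rw [h3] at hmain
    have h4 : ‖R + (t * (m - 1)) • u‖ ^ 2
        = ‖R‖ ^ 2 + 2 * ((t * (m - 1)) * ⟪R, u⟫) + (t * (m - 1)) ^ 2 := by
      rw [norm_add_sq_real, real_inner_smul_right, norm_smul, hu1, mul_one,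
        Real.norm_eq_abs, sq_abs]
    rw [h4, hRu] at hmain
    have hc0 : 0 < t * (m - 1) := mul_pos ht0 (by linarith)
    nlinarith [hmain, hc0, htκ, hκpos]
  -- equality case: all active generators coincide with x i - u
  have hxii : ⟪x i, x i⟫ = 1 := by
    rw [real_inner_self_eq_norm_sq, hxnorm i]; norm_num
  have hxirep2 : x i = ∑ j, lam j • x j + (1 - m) • u := by
    rw [hxrep, add_assoc, ← add_smul]
    have hz : m - 1 + (1 - m) = 0 := by ring
    rw [hz, zero_smul, add_zero]
  have hxle : ∀ j, ⟪x j, x i⟫ ≤ 1 := by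
    intro j
    have h1 := real_inner_le_norm (x j) (x i)
    rwa [hxnorm j, hxnorm i, one_mul] at h1
  have hule : ⟪u, x i⟫ ≤ 1 := by
    have h1 := real_inner_le_norm u (x i)
    rwa [hu1, hxnorm i, one_mul] at h1
  have hident : (∑ j, lam j * (1 - ⟪x j, x i⟫)) + (1 - m) * (1 - ⟪u, x i⟫) = 0 := by
    have h5 : ⟪x i, x i⟫ = (∑ j, lam j * ⟪x j, x i⟫) + (1 - m) * ⟪u, x i⟫ := by
      nth_rewrite 1 [hxirep2]
      rw [inner_add_left, sum_inner, real_inner_smul_left]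
      congr 1
      exact Finset.sum_congr rfl (fun j _ => real_inner_smul_left _ _ _)
    have h6 : ∑ j, lam j * (1 - ⟪x j, x i⟫) = m - ∑ j, lam j * ⟪x j, x i⟫ := by
      rw [hmdef, ← Finset.sum_sub_distrib]
      exact Finset.sum_congr rfl (fun j _ => by ring)
    rw [h6]
    rw [hxii] at h5
    ring_nf
    ring_nf at h5
    linarith
  have hnn : ∀ j ∈ univ, 0 ≤ lam j * (1 - ⟪x j, x i⟫) :=
    fun j _ => mul_nonneg (hlam0 j) (by linarith [hxle j])
  have hunn : 0 ≤ (1 - m) * (1 - ⟪u, x i⟫) :=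
    mul_nonneg (by linarith) (by linarith [hule])
  have hsum0 : (∑ j, lam j * (1 - ⟪x j, x i⟫)) = 0 := by
    have h7 : 0 ≤ ∑ j, lam j * (1 - ⟪x j, x i⟫) := Finset.sum_nonneg hnn
    linarith
  have hu0 : (1 - m) * (1 - ⟪u, x i⟫) = 0 := by linarith
  have heach := (Finset.sum_eq_zero_iff_of_nonneg hnn).mp hsum0
  have hm_eq : m = 1 := by
    by_contra hmne
    have h8 : ⟪u, x i⟫ = 1 := by
      rcases mul_eq_zero.mp hu0 with h | h
      · exact absurd (by linarith : m = 1) hmne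
      · linarith
    have h9 : u = x i := unit_inner_eq hu1 (hxnorm i) h8
    exact hwine (by rw [← h9, sub_self])
  have hxeq : ∀ j, 0 < lam j → x j = x i := by
    intro j hj
    have h10 := heach j (mem_univ j)
    have h11 : ⟪x j, x i⟫ = 1 := by
      rcases mul_eq_zero.mp h10 with h | h
      · linarith
      · linarith
    exact unit_inner_eq (hxnorm j) (hxnorm i) h11
  constructor
  · refine ⟨∑ j, μ j, Finset.sum_nonneg (fun j _ => hμ0 j), ?_⟩
    rw [hμ, Finset.sum_smul]
    refine Finset.sum_congr rfl (fun j _ => ?_)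
    rcases eq_or_lt_of_le (hμ0 j) with h0 | h0
    · rw [← h0, zero_smul, zero_smul]
    · have hlj : 0 < lam j := by
        have := hν0 j
        simp only [hlamdef]
        linarith
      rw [hxeq j hlj]
  · refine ⟨∑ j, ν j, Finset.sum_nonneg (fun j _ => hν0 j), ?_⟩
    rw [hν, Finset.sum_smul]
    refine Finset.sum_congr rfl (fun j _ => ?_)
    rcases eq_or_lt_of_le (hν0 j) with h0 | h0
    · rw [← h0, zero_smul, zero_smul]
    · have hlj : 0 < lam j := by
        have := hμ0 j
        simp only [hlamdef]
        linarith
      rw [hxeq j hlj]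
end
end

section
/- Let X ∈ ℝ^{n×p} (p ≥ 1) have columns x₁,…,xₚ, let y ∈ ℝⁿ be a nonzero vector in the column space of X, and let α > 0 be such that X and αy satisfy the vertex non-cover condition. Suppose η > 0 satisfies η < 2α‖y‖₂² − 2·max_{i∈[p]} ⟨y, xᵢ⟩. Let T be the convex cone {Σ_{i=1}^p λᵢ·(xᵢ − αy) : λᵢ ≥ 0}, and let I ⊆ [p] be a set of indices such that every i ∈ [p] for which xᵢ − αy generates an extreme ray of T belongs to I. Then for every global minimizer β* of β ↦ ‖Xβ − y‖₂² + η·Σ_{i=1}^p βᵢ over the nonnegative orthant {β ∈ ℝᵖ : βᵢ ≥ 0 for all i}, one has βᵢ* = 0 for every i ∉ I. -/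
/-!
At the minimiser `β` the residual `r = Xβ - y` satisfies the KKT conditions `⟪r, xⱼ⟫ ≥ -η/2`,
with equality where `βⱼ > 0`. Comparing `β` with `0` and using the bound on `η` shows that
`c = -η/2 - α⟪r, y⟫` is positive. Hence the linear form `⟪r, ·⟫` is at least `c > 0` on every
generator `xⱼ - αy` of `T` and equals `c` on those with `βⱼ > 0`. If such a generator
`xᵢ - αy` is a nonnegative combination of generators, the weights therefore sum to at most one,
which exhibits `xᵢ` as a convex combination of the columns and `αy`. As `xᵢ` is a vertex, only
generators equal to `xᵢ - αy` occur, so `xᵢ - αy` spans an extreme ray of `T`, and `i ∈ I`.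
-/

open Finset RealInnerProductSpace

noncomputable section

/-- `X` (with columns `x i`) and the point `v` satisfy the vertex non-cover condition. -/
def VertexNonCover {E : Type*} [AddCommGroup E] [Module ℝ E] {p : ℕ}
    (x : Fin p → E) (v : E) : Prop :=
  (∀ i, v ≠ x i) ∧
    Set.extremePoints ℝ (convexHull ℝ (Set.range x ∪ {v})) = Set.range x ∪ {v}

theorem nonneg_of_forall_mul_add_mul_sq_nonneg {a b ε : ℝ} (hε : 0 < ε)
    (h : ∀ δ, 0 < δ → δ ≤ ε → 0 ≤ a * δ + b * δ ^ 2) : 0 ≤ a := by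
  by_contra! ha
  set δ := min ε (-a / (|b| + 1))
  have hδ : 0 < δ := lt_min hε (div_pos (neg_pos.2 ha) (by positivity))
  have hbδ : b * δ < -a :=
    calc b * δ ≤ |b| * (-a / (|b| + 1)) :=
          mul_le_mul (le_abs_self b) (min_le_right _ _) hδ.le (abs_nonneg b)
      _ < -a := by
          rw [mul_div_assoc', div_lt_iff₀ (by positivity)]
          nlinarith
  nlinarith [h δ hδ (min_le_left _ _)]

section Extreme

variable {𝕜 E ι : Type*} [Field 𝕜] [LinearOrder 𝕜] [IsStrictOrderedRing 𝕜]
  [AddCommGroup E] [Module 𝕜 E] [Fintype ι]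

theorem eq_of_mem_extremePoints_of_sum_smul_eq {S : Set E} {x₀ : E}
    (hx₀ : x₀ ∈ (convexHull 𝕜 S).extremePoints 𝕜) {a : ι → 𝕜} {z : ι → E}
    (ha : ∀ j, 0 ≤ a j) (ha₁ : ∑ j, a j = 1) (hz : ∀ j, z j ∈ S)
    (hsum : ∑ j, a j • z j = x₀) {j : ι} (hj : a j ≠ 0) : z j = x₀ := by
  classical
  by_contra hne
  set J := univ.filter (fun k => z k ≠ x₀)
  have hJpos : 0 < ∑ k ∈ J, a k :=
    (lt_of_le_of_ne (ha j) (Ne.symm hj)).trans_le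
      (single_le_sum (fun k _ => ha k) (mem_filter.2 ⟨mem_univ j, hne⟩))
  have hJsum : ∑ k ∈ J, a k • z k = (∑ k ∈ J, a k) • x₀ := by
    have h0 : ∑ k ∈ J, a k • (z k - x₀) = 0 := by
      rw [sum_filter_of_ne (p := fun k => z k ≠ x₀)
        fun k _ hk heq => hk (by rw [heq, sub_self, smul_zero])]
      simp only [smul_sub]
      rw [sum_sub_distrib, hsum, ← sum_smul, ha₁, one_smul, sub_self]
    rw [sum_smul, ← sub_eq_zero, ← sum_sub_distrib]
    simpa only [smul_sub] using h0
  have hcenter : J.centerMass a z = x₀ := by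
    rw [centerMass, hJsum, smul_smul, inv_mul_cancel₀ hJpos.ne', one_smul]
  have hmem : J.centerMass a z ∈ convexHull 𝕜 (convexHull 𝕜 S \ {x₀}) :=
    J.centerMass_mem_convexHull (fun k _ => ha k) hJpos
      fun k hk => ⟨subset_convexHull 𝕜 S (hz k), (mem_filter.1 hk).2⟩
  exact ((convex_convexHull 𝕜 S).mem_extremePoints_iff_mem_sdiff_convexHull_sdiff.1 hx₀).2
    (hcenter ▸ hmem)

end Extreme

-- On the nonnegative orthant `∑ j, γ j` is the ℓ¹ norm of `γ`, so this is the lasso objective.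
def lassoObjective {F ι : Type*} [NormedAddCommGroup F] [Module ℝ F] [Fintype ι]
    (x : ι → F) (y : F) (η : ℝ) (γ : ι → ℝ) : ℝ :=
  ‖∑ j, γ j • x j - y‖ ^ 2 + η * ∑ j, γ j

theorem add_single_nonneg {ι : Type*} [DecidableEq ι] {β : ι → ℝ} (hβ : 0 ≤ β) {j : ι}
    {δ : ℝ} (hδ : 0 ≤ β j + δ) : 0 ≤ β + Pi.single j δ := by
  intro k
  by_cases hk : k = j
  · subst hk; simpa using hδ
  · simpa [hk] using hβ k

section Lasso

variable {F ι : Type*} [NormedAddCommGroup F] [InnerProductSpace ℝ F] [Fintype ι]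
  {x : ι → F} {y : F} {η : ℝ} {β : ι → ℝ}

theorem lassoObjective_add_single [DecidableEq ι] (j : ι) (δ : ℝ) :
    lassoObjective x y η (β + Pi.single j δ) = lassoObjective x y η β +
      ((2 * ⟪∑ k, β k • x k - y, x j⟫ + η) * δ + ‖x j‖ ^ 2 * δ ^ 2) := by
  have hx : ∑ k, (β + Pi.single j δ : ι → ℝ) k • x k - y =
      (∑ k, β k • x k - y) + δ • x j := by
    simp only [Pi.add_apply, Pi.single_apply, add_smul, ite_smul, zero_smul, sum_add_distrib,
      sum_ite_eq', mem_univ, ↓reduceIte]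
    abel
  have hs : ∑ k, (β + Pi.single j δ : ι → ℝ) k = ∑ k, β k + δ := by
    simp [sum_add_distrib]
  rw [lassoObjective, lassoObjective, hx, hs, norm_add_sq_real, real_inner_smul_right, norm_smul,
    mul_pow, Real.norm_eq_abs, sq_abs]
  ring

theorem increment_nonneg_of_isMinOn (hβ : 0 ≤ β)
    (hmin : IsMinOn (lassoObjective x y η) (Set.Ici 0) β) (j : ι) {δ : ℝ} (hδ : 0 ≤ β j + δ) :
    0 ≤ (2 * ⟪∑ k, β k • x k - y, x j⟫ + η) * δ + ‖x j‖ ^ 2 * δ ^ 2 := by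
  classical
  have := isMinOn_iff.1 hmin _ (add_single_nonneg hβ hδ)
  rw [lassoObjective_add_single] at this
  linarith

theorem neg_half_le_inner_residual (hβ : 0 ≤ β)
    (hmin : IsMinOn (lassoObjective x y η) (Set.Ici 0) β) (j : ι) :
    -(η / 2) ≤ ⟪∑ k, β k • x k - y, x j⟫ := by
  have := nonneg_of_forall_mul_add_mul_sq_nonneg one_pos fun δ hδ _ =>
    increment_nonneg_of_isMinOn hβ hmin j (add_nonneg (hβ j) hδ.le)
  linarith

theorem inner_residual_eq_of_pos (hβ : 0 ≤ β)
    (hmin : IsMinOn (lassoObjective x y η) (Set.Ici 0) β) {j : ι} (hj : 0 < β j) :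
    ⟪∑ k, β k • x k - y, x j⟫ = -(η / 2) := by
  refine le_antisymm ?_ (neg_half_le_inner_residual hβ hmin j)
  have := nonneg_of_forall_mul_add_mul_sq_nonneg (a := -(2 * ⟪∑ k, β k • x k - y, x j⟫ + η))
    (b := ‖x j‖ ^ 2) hj fun δ _ hδ => by
    have := increment_nonneg_of_isMinOn hβ hmin j (δ := -δ) (by linarith)
    linarith
  linarith

theorem inner_residual_sum_smul (hβ : 0 ≤ β)
    (hmin : IsMinOn (lassoObjective x y η) (Set.Ici 0) β) :
    ⟪∑ k, β k • x k - y, ∑ k, β k • x k⟫ = -(η / 2) * ∑ k, β k := by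
  rw [inner_sum, mul_sum]
  refine sum_congr rfl fun j _ => ?_
  rw [real_inner_smul_right]
  rcases (hβ j).eq_or_lt with h | h
  · rw [← h, Pi.zero_apply]; ring
  · rw [inner_residual_eq_of_pos hβ hmin h]; ring

theorem half_add_mul_inner_residual_neg (hβ : 0 ≤ β) (hmin : IsMinOn (lassoObjective x y η) (Set.Ici 0) β)
    (hs : 0 < ∑ k, β k) {α M : ℝ} (hα : 0 < α) (hη₀ : 0 < η) (hM : ∀ j, ⟪y, x j⟫ ≤ M)
    (hη : η < 2 * α * ‖y‖ ^ 2 - 2 * M) :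
    η / 2 + α * ⟪∑ k, β k • x k - y, y⟫ < 0 := by
  have hslack := inner_residual_sum_smul hβ hmin
  set r := ∑ k, β k • x k - y
  have hfit : ∑ k, β k • x k = r + y := by simp [r]
  replace hslack : 2 * (‖r‖ ^ 2 + ⟪r, y⟫) + η * ∑ k, β k = 0 := by
    rw [hfit, inner_add_right, real_inner_self_eq_norm_sq] at hslack
    linarith
  have hzero : ‖r‖ ^ 2 + η * ∑ k, β k ≤ ‖y‖ ^ 2 := by
    simpa [lassoObjective] using isMinOn_iff.1 hmin 0 Set.self_mem_Ici
  have hcorr : ⟪r, y⟫ ≤ (∑ k, β k) * M - ‖y‖ ^ 2 := by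
    have : ⟪∑ k, β k • x k, y⟫ ≤ (∑ k, β k) * M := by
      rw [sum_inner, sum_mul]
      refine sum_le_sum fun j _ => ?_
      rw [real_inner_smul_left, real_inner_comm]
      exact mul_le_mul_of_nonneg_left (hM j) (hβ j)
    rw [hfit, inner_add_left, real_inner_self_eq_norm_sq] at this
    linarith
  have hr := sq_nonneg ‖r‖
  by_contra! hcon
  have hηM : η / 2 ≤ M := by nlinarith
  have hαs : 1 < α * ∑ k, β k := by nlinarith
  nlinarith

end Lasso

section Cone

variable {E ι : Type*} [AddCommGroup E] [Module ℝ E] [Fintype ι] {x : ι → E} {v : E} {i : ι}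

theorem sum_le_one_of_sub_eq_sum_smul (ℓ : E →ₗ[ℝ] ℝ) (hpos : 0 < ℓ (x i - v))
    (hmin : ∀ j, ℓ (x i - v) ≤ ℓ (x j - v)) {lam : ι → ℝ} (hlam : ∀ j, 0 ≤ lam j)
    (h : x i - v = ∑ j, lam j • (x j - v)) : ∑ j, lam j ≤ 1 := by
  refine le_of_mul_le_mul_right ?_ hpos
  calc (∑ j, lam j) * ℓ (x i - v) = ∑ j, lam j * ℓ (x i - v) := sum_mul ..
    _ ≤ ∑ j, lam j * ℓ (x j - v) :=
        sum_le_sum fun j _ => mul_le_mul_of_nonneg_left (hmin j) (hlam j)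
    _ = 1 * ℓ (x i - v) := by
        rw [one_mul, h, map_sum]
        simp only [map_smul, smul_eq_mul]

theorem eq_of_sub_eq_sum_smul (ℓ : E →ₗ[ℝ] ℝ) (hpos : 0 < ℓ (x i - v))
    (hmin : ∀ j, ℓ (x i - v) ≤ ℓ (x j - v))
    (hext : x i ∈ (convexHull ℝ (Set.range x ∪ {v})).extremePoints ℝ)
    {lam : ι → ℝ} (hlam : ∀ j, 0 ≤ lam j) (h : x i - v = ∑ j, lam j • (x j - v))
    {j : ι} (hj : lam j ≠ 0) : x j = x i := by
  have hle := sum_le_one_of_sub_eq_sum_smul ℓ hpos hmin hlam h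
  refine eq_of_mem_extremePoints_of_sum_smul_eq hext (a := fun o => o.elim (1 - ∑ k, lam k) lam)
    (z := fun o => o.elim v x) (j := some j) ?_ ?_ ?_ ?_ hj
  · rintro (_ | k)
    exacts [sub_nonneg.2 hle, hlam k]
  · simp [Fintype.sum_option]
  · rintro (_ | k)
    exacts [Or.inr rfl, Or.inl ⟨k, rfl⟩]
  · simp only [smul_sub, sum_sub_distrib, ← sum_smul] at h
    rw [sub_eq_iff_eq_add] at h
    simp only [Fintype.sum_option, Option.elim]
    rw [h, sub_smul, one_smul]
    abel

theorem sum_smul_sub_eq_of_forall_ne_zero (μ : ι → ℝ) (h : ∀ j, μ j ≠ 0 → x j = x i) :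
    ∑ j, μ j • (x j - v) = (∑ j, μ j) • (x i - v) := by
  rw [sum_smul]
  refine sum_congr rfl fun j _ => ?_
  by_cases hj : μ j = 0
  · simp [hj]
  · rw [h j hj]

theorem generatesExtremeRay_sub_of_mem_extremePoints (ℓ : E →ₗ[ℝ] ℝ)
    (hpos : 0 < ℓ (x i - v)) (hmin : ∀ j, ℓ (x i - v) ≤ ℓ (x j - v))
    (hext : x i ∈ (convexHull ℝ (Set.range x ∪ {v})).extremePoints ℝ) :
    GeneratesExtremeRay {w | ∃ lam : ι → ℝ, (∀ j, 0 ≤ lam j) ∧ w = ∑ j, lam j • (x j - v)}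
      (x i - v) := by
  classical
  refine ⟨fun h0 => by simp [h0] at hpos,
    ⟨Pi.single i 1, fun j => by simp [Pi.single_apply, apply_ite], by simp⟩, ?_⟩
  rintro _ _ ⟨μ, hμ, rfl⟩ ⟨ν, hν, rfl⟩ hsum
  have hsupp : ∀ j, μ j + ν j ≠ 0 → x j = x i :=
    fun j => eq_of_sub_eq_sum_smul ℓ hpos hmin hext (fun j => add_nonneg (hμ j) (hν j))
      (by simpa only [add_smul, sum_add_distrib] using hsum)
  refine ⟨⟨∑ j, μ j, sum_nonneg fun j _ => hμ j,
      sum_smul_sub_eq_of_forall_ne_zero μ fun j hj => hsupp j ?_⟩,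
    ⟨∑ j, ν j, sum_nonneg fun j _ => hν j,
      sum_smul_sub_eq_of_forall_ne_zero ν fun j hj => hsupp j ?_⟩⟩
  · exact (add_pos_of_pos_of_nonneg ((hμ j).lt_of_ne' hj) (hν j)).ne'
  · exact (add_pos_of_nonneg_of_pos (hμ j) ((hν j).lt_of_ne' hj)).ne'

end Cone

theorem stmt1_general {n p : ℕ} (hp : 0 < p)
    (x : Fin p → EuclideanSpace ℝ (Fin n)) (y : EuclideanSpace ℝ (Fin n))
    (α : ℝ) (hα : 0 < α)
    (hvnc : VertexNonCover x (α • y))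
    (η : ℝ) (hη0 : 0 < η)
    (hη : η < 2 * α * ‖y‖ ^ 2 - 2 * Finset.univ.sup'
      (Finset.univ_nonempty_iff.mpr ⟨⟨0, hp⟩⟩) (fun i => ⟪y, x i⟫))
    (T : Set (EuclideanSpace ℝ (Fin n)))
    (hT : T = {v | ∃ lam : Fin p → ℝ, (∀ i, 0 ≤ lam i) ∧
      v = ∑ i, lam i • (x i - α • y)})
    (I : Set (Fin p))
    (hI : ∀ i, GeneratesExtremeRay T (x i - α • y) → i ∈ I)
    (β : Fin p → ℝ) (hβ : ∀ i, 0 ≤ β i)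
    (hmin : ∀ γ : Fin p → ℝ, (∀ i, 0 ≤ γ i) →
      ‖(∑ i, β i • x i) - y‖ ^ 2 + η * ∑ i, β i ≤
        ‖(∑ i, γ i • x i) - y‖ ^ 2 + η * ∑ i, γ i) :
    ∀ i, i ∉ I → β i = 0 := by
  intro i hiI
  by_contra hβi
  replace hβi : 0 < β i := (hβ i).lt_of_ne' hβi
  have hmin' : IsMinOn (lassoObjective x y η) (Set.Ici 0) β :=
    isMinOn_iff.2 fun γ hγ => hmin γ hγ
  have hsign := half_add_mul_inner_residual_neg hβ hmin'
    (hβi.trans_le (single_le_sum (fun j _ => hβ j) (mem_univ i))) hα hη0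
    (fun j => le_sup' (fun j => ⟪y, x j⟫) (mem_univ j)) hη
  subst hT
  refine hiI (hI i (generatesExtremeRay_sub_of_mem_extremePoints
    (innerₛₗ ℝ (∑ j, β j • x j - y)) ?_ (fun j => ?_) (hvnc.2.symm ▸ Or.inl ⟨i, rfl⟩)))
  · simp only [innerₛₗ_apply_apply, inner_sub_right, real_inner_smul_right,
      inner_residual_eq_of_pos hβ hmin' hβi]
    linarith
  · simp only [innerₛₗ_apply_apply, inner_sub_right, real_inner_smul_right,
      inner_residual_eq_of_pos hβ hmin' hβi]
    linarith [neg_half_le_inner_residual hβ hmin' j]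

theorem stmt1 {n p : ℕ} (hp : 0 < p)
    (x : Fin p → EuclideanSpace ℝ (Fin n)) (y : EuclideanSpace ℝ (Fin n))
    (hy0 : y ≠ 0)
    (hycol : ∃ c : Fin p → ℝ, y = ∑ i, c i • x i)
    (α : ℝ) (hα : 0 < α)
    (hvnc : VertexNonCover x (α • y))
    (η : ℝ) (hη0 : 0 < η)
    (hη : η < 2 * α * ‖y‖ ^ 2 - 2 * Finset.univ.sup'
      (Finset.univ_nonempty_iff.mpr ⟨⟨0, hp⟩⟩) (fun i => ⟪y, x i⟫))
    (T : Set (EuclideanSpace ℝ (Fin n)))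
    (hT : T = {v | ∃ lam : Fin p → ℝ, (∀ i, 0 ≤ lam i) ∧
      v = ∑ i, lam i • (x i - α • y)})
    (I : Set (Fin p))
    (hI : ∀ i, GeneratesExtremeRay T (x i - α • y) → i ∈ I)
    (β : Fin p → ℝ) (hβ : ∀ i, 0 ≤ β i)
    (hmin : ∀ γ : Fin p → ℝ, (∀ i, 0 ≤ γ i) →
      ‖(∑ i, β i • x i) - y‖ ^ 2 + η * ∑ i, β i ≤
        ‖(∑ i, γ i • x i) - y‖ ^ 2 + η * ∑ i, γ i) :
    ∀ i, i ∉ I → β i = 0 :=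
  stmt1_general hp x y α hα hvnc η hη0 hη T hT I hI β hβ hmin
end
end

section
/- Let q ∈ ℝ with q ≥ 2, let y ∈ ℝ, and set γ = 1/(2q−2). Define F : ℝ → ℝ by F(u) = |u − y|^q − γ·q·u·sign(u − y)·|u − y|^{q−1} + (1−γ)·q·u·sign(y)·|y|^{q−1}, where |t|^r denotes the real power of the absolute value and sign(t) ∈ {−1,0,1}. Then (a) F is differentiable on ℝ and u·F′(u) ≥ 0 for every u ∈ ℝ, and (b) F(u) ≥ F(0) = |y|^q for every u ∈ ℝ. -/
/-!
Write `ψ_p t = sign t · |t|^p` (`signedRpow p t`), so that `f' = q ψ_{q-1}(· - y)` and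
`f'' = q (q-1) |· - y|^{q-2}`. With `γ = 1/(2q-2)` one finds
`u F'(u) = q/(2q-2) · ((2q-3) u (ψ_{q-1}(u-y) - ψ_{q-1}(-y)) - (q-1) u² |u-y|^{q-2})`,
which is nonnegative by the two-point inequality
`p (s-r)² |s|^{p-1} ≤ (2p-1) (s-r) (ψ_p s - ψ_p r)` for `p = q - 1 ≥ 1`, `s = u - y`, `r = -y`.
By oddness of `ψ_p` one may take `s ≥ 0`; for `r ≥ 0` the inequality comes from monotonicity of
`t ↦ t^{p-1}`, for `r < 0` from Young's inequality `p b s^{p-1} ≤ b^p + (p-1) s^p`.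
Hence `F` decreases on `(-∞, 0]` and increases on `[0, ∞)`.
-/

open Set

noncomputable def signedRpow (p x : ℝ) : ℝ := Real.sign x * |x| ^ p

section signedRpow

variable {p x : ℝ}

lemma signedRpow_of_nonneg (hx : 0 ≤ x) (hp : p ≠ 0) : signedRpow p x = x ^ p := by
  rcases hx.eq_or_lt with rfl | hx
  · simp [signedRpow, Real.zero_rpow hp]
  · rw [signedRpow, Real.sign_of_pos hx, abs_of_pos hx, one_mul]

lemma signedRpow_neg (p x : ℝ) : signedRpow p (-x) = -signedRpow p x := by
  simp only [signedRpow, Real.sign_neg, abs_neg, neg_mul]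

lemma signedRpow_eq_mul_abs_rpow_sub_one (p x : ℝ) : signedRpow p x = x * |x| ^ (p - 1) := by
  rcases eq_or_ne x 0 with rfl | hx
  · simp [signedRpow]
  · have hx' : 0 < |x| := abs_pos.2 hx
    rw [signedRpow, show p = 1 + (p - 1) by ring, Real.rpow_add hx', Real.rpow_one,
      add_sub_cancel_left]
    rcases hx.lt_or_gt with hx | hx
    · rw [Real.sign_of_neg hx, abs_of_neg hx]; ring
    · rw [Real.sign_of_pos hx, abs_of_pos hx]; ring

lemma hasDerivAt_abs_rpow' (hp : 1 < p) (x : ℝ) :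
    HasDerivAt (fun x => |x| ^ p) (p * signedRpow (p - 1) x) x := by
  convert hasDerivAt_abs_rpow x hp using 1
  rw [signedRpow_eq_mul_abs_rpow_sub_one]; ring_nf

lemma hasDerivAt_signedRpow_of_pos (hx : 0 < x) :
    HasDerivAt (signedRpow p) (p * |x| ^ (p - 1)) x := by
  rw [abs_of_pos hx]
  refine (Real.hasDerivAt_rpow_const (Or.inl hx.ne')).congr_of_eventuallyEq ?_
  filter_upwards [Ioi_mem_nhds hx] with z hz
  rw [signedRpow, Real.sign_of_pos hz, abs_of_pos hz, one_mul]

lemma hasDerivAt_signedRpow_zero (hp : 1 ≤ p) :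
    HasDerivAt (signedRpow p) (p * |0| ^ (p - 1)) 0 := by
  have hp0 : p ≠ 0 := by positivity
  have hpow := Real.hasDerivAt_rpow_const (x := 0) (Or.inr hp)
  rw [abs_zero]
  have hright : HasDerivWithinAt (signedRpow p) (p * 0 ^ (p - 1)) (Ici 0) 0 :=
    hpow.hasDerivWithinAt.congr (fun z hz => signedRpow_of_nonneg hz hp0)
      (signedRpow_of_nonneg le_rfl hp0)
  have hleft : HasDerivWithinAt (signedRpow p) (p * 0 ^ (p - 1)) (Iic 0) 0 := by
    have h := (hpow.comp_of_eq 0 (hasDerivAt_neg 0) neg_zero.symm).neg.hasDerivWithinAt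
      (s := Iic 0)
    refine (h.congr (fun z hz => ?_) ?_).congr_deriv (by ring)
    · simp only [Pi.neg_apply, Function.comp_apply]
      rw [← signedRpow_of_nonneg (neg_nonneg.2 hz) hp0, signedRpow_neg, neg_neg]
    · simp [signedRpow, Real.zero_rpow hp0]
  simpa [Iic_union_Ici] using hleft.union hright

lemma hasDerivAt_signedRpow (hp : 1 ≤ p) (x : ℝ) :
    HasDerivAt (signedRpow p) (p * |x| ^ (p - 1)) x := by
  rcases lt_trichotomy x 0 with hx | rfl | hx
  · have h := ((hasDerivAt_signedRpow_of_pos (p := p) (neg_pos.2 hx)).comp x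
      (hasDerivAt_neg x)).neg
    rw [show signedRpow p = -signedRpow p ∘ Neg.neg by funext z; simp [signedRpow_neg]]
    exact h.congr_deriv (by rw [abs_neg]; ring)
  · exact hasDerivAt_signedRpow_zero hp
  · exact hasDerivAt_signedRpow_of_pos hx

end signedRpow

section inequalities

variable {p r s : ℝ}

lemma rpow_eq_mul_rpow_sub_one {x : ℝ} (hx : 0 ≤ x) (hp : p ≠ 0) :
    x ^ p = x * x ^ (p - 1) := by
  rw [← Real.rpow_one_add' hx (by simpa using hp), add_sub_cancel]

lemma sub_sq_mul_rpow_sub_one_le (hp : 1 ≤ p) (hr : 0 ≤ r) (hs : 0 ≤ s) :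
    (s - r) ^ 2 * s ^ (p - 1) ≤ (s - r) * (s ^ p - r ^ p) := by
  have hmono : 0 ≤ (s - r) * (s ^ (p - 1) - r ^ (p - 1)) := by
    rcases le_total r s with hrs | hsr
    · exact mul_nonneg (sub_nonneg.2 hrs)
        (sub_nonneg.2 (Real.rpow_le_rpow hr hrs (by linarith)))
    · exact mul_nonneg_of_nonpos_of_nonpos (sub_nonpos.2 hsr)
        (sub_nonpos.2 (Real.rpow_le_rpow hs hsr (by linarith)))
  have hp0 : p ≠ 0 := by positivity
  have h : (s - r) * (s ^ p - r ^ p) - (s - r) ^ 2 * s ^ (p - 1)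
      = r * ((s - r) * (s ^ (p - 1) - r ^ (p - 1))) := by
    rw [rpow_eq_mul_rpow_sub_one hs hp0, rpow_eq_mul_rpow_sub_one hr hp0]; ring
  linarith [mul_nonneg hr hmono]

lemma mul_mul_rpow_sub_one_le {b : ℝ} (hp : 1 ≤ p) (hb : 0 ≤ b) (hs : 0 ≤ s) :
    p * (b * s ^ (p - 1)) ≤ b ^ p + (p - 1) * s ^ p := by
  have hp0 : 0 < p := by linarith
  have h := Real.geom_mean_le_arith_mean2_weighted (w₁ := 1 / p) (w₂ := (p - 1) / p)
    (by positivity) (div_nonneg (by linarith) hp0.le) (Real.rpow_nonneg hb p)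
    (Real.rpow_nonneg hs p) (by field_simp; ring)
  rw [← Real.rpow_mul hb, ← Real.rpow_mul hs, mul_one_div_cancel hp0.ne', Real.rpow_one,
    mul_div_cancel₀ _ hp0.ne'] at h
  rw [← le_div_iff₀' hp0]
  linarith [show (1 / p * b ^ p + (p - 1) / p * s ^ p) = (b ^ p + (p - 1) * s ^ p) / p by ring]

lemma mul_sub_sq_mul_rpow_le_of_nonneg (hp : 1 ≤ p) (hs : 0 ≤ s) (r : ℝ) :
    p * (s - r) ^ 2 * s ^ (p - 1) ≤ (2 * p - 1) * ((s - r) * (s ^ p - signedRpow p r)) := by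
  have hp0 : p ≠ 0 := by positivity
  rcases le_total 0 r with hr | hr
  · rw [signedRpow_of_nonneg hr hp0, mul_assoc]
    calc p * ((s - r) ^ 2 * s ^ (p - 1)) ≤ (2 * p - 1) * ((s - r) ^ 2 * s ^ (p - 1)) :=
          mul_le_mul_of_nonneg_right (by linarith) (by positivity)
      _ ≤ (2 * p - 1) * ((s - r) * (s ^ p - r ^ p)) :=
          mul_le_mul_of_nonneg_left (sub_sq_mul_rpow_sub_one_le hp hr hs) (by linarith)
  · obtain ⟨b, hb, rfl⟩ : ∃ b, 0 ≤ b ∧ r = -b :=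
      ⟨-r, neg_nonneg.2 hr, (neg_neg r).symm⟩
    rw [signedRpow_neg, signedRpow_of_nonneg hb hp0, sub_neg_eq_add, sub_neg_eq_add]
    have key : p * ((s + b) * s ^ (p - 1)) ≤ (2 * p - 1) * (s ^ p + b ^ p) :=
      calc p * ((s + b) * s ^ (p - 1)) = p * s ^ p + p * (b * s ^ (p - 1)) := by
            rw [rpow_eq_mul_rpow_sub_one hs hp0]; ring
        _ ≤ p * s ^ p + (b ^ p + (p - 1) * s ^ p) := by
            gcongr; exact mul_mul_rpow_sub_one_le hp hb hs
        _ ≤ (2 * p - 1) * (s ^ p + b ^ p) := by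
            nlinarith [mul_nonneg (sub_nonneg.2 hp) (Real.rpow_nonneg hb p)]
    nlinarith [mul_le_mul_of_nonneg_left key (add_nonneg hs hb)]

lemma mul_sub_sq_mul_abs_rpow_le (hp : 1 ≤ p) (s r : ℝ) :
    p * (s - r) ^ 2 * |s| ^ (p - 1)
      ≤ (2 * p - 1) * ((s - r) * (signedRpow p s - signedRpow p r)) := by
  have hp0 : p ≠ 0 := by positivity
  rcases le_total 0 s with hs | hs
  · rw [abs_of_nonneg hs, signedRpow_of_nonneg hs hp0]
    exact mul_sub_sq_mul_rpow_le_of_nonneg hp hs r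
  · have h := mul_sub_sq_mul_rpow_le_of_nonneg hp (neg_nonneg.2 hs) (-r)
    rw [← signedRpow_of_nonneg (neg_nonneg.2 hs) hp0, signedRpow_neg, signedRpow_neg] at h
    rw [abs_of_nonpos hs]
    linarith [show (-s - -r) ^ 2 = (s - r) ^ 2 by ring]

end inequalities

lemma le_of_sub_mul_deriv_nonneg {F : ℝ → ℝ} (hF : Differentiable ℝ F) {a : ℝ}
    (h : ∀ u, 0 ≤ (u - a) * deriv F u) (u : ℝ) : F a ≤ F u := by
  rcases le_total a u with hau | hua
  · refine monotoneOn_of_deriv_nonneg (convex_Ici a) hF.continuous.continuousOn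
      hF.differentiableOn (fun x hx => ?_) self_mem_Ici hau hau
    rw [interior_Ici] at hx
    exact nonneg_of_mul_nonneg_right (h x) (sub_pos.2 hx)
  · refine antitoneOn_of_deriv_nonpos (convex_Iic a) hF.continuous.continuousOn
      hF.differentiableOn (fun x hx => ?_) hua self_mem_Iic hua
    rw [interior_Iic] at hx
    exact nonpos_of_mul_nonneg_right (h x) (sub_neg.2 hx)

theorem stmt4 (q : ℝ) (hq : 2 ≤ q) (y : ℝ) (γ : ℝ) (hγ : γ = 1 / (2 * q - 2))
    (F : ℝ → ℝ)
    (hF : F = fun u : ℝ =>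
      |u - y| ^ q - γ * (q * u * Real.sign (u - y) * |u - y| ^ (q - 1))
        + (1 - γ) * (q * u * Real.sign y * |y| ^ (q - 1))) :
    (Differentiable ℝ F ∧ ∀ u : ℝ, 0 ≤ u * deriv F u) ∧
      ((∀ u : ℝ, F 0 ≤ F u) ∧ F 0 = |y| ^ q) := by
  have hF' : F = fun u => |u - y| ^ q - γ * q * (u * signedRpow (q - 1) (u - y))
      + (1 - γ) * q * signedRpow (q - 1) y * u := by
    rw [hF]; funext u; simp only [signedRpow]; ring
  have hderiv (u : ℝ) : HasDerivAt F (q * signedRpow (q - 1) (u - y)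
      - γ * q * (signedRpow (q - 1) (u - y) + u * ((q - 1) * |u - y| ^ (q - 1 - 1)))
      + (1 - γ) * q * signedRpow (q - 1) y) u := by
    rw [hF']
    have hψ := (hasDerivAt_signedRpow (p := q - 1) (by linarith) (u - y)).comp_sub_const u y
    refine ((((hasDerivAt_abs_rpow' (p := q) (by linarith) (u - y)).comp_sub_const u y).sub
      (((hasDerivAt_id' u).mul hψ).const_mul (γ * q))).add
      ((hasDerivAt_id' u).const_mul ((1 - γ) * q * signedRpow (q - 1) y))).congr_deriv (by ring)
  have hmul (u : ℝ) : 0 ≤ u * deriv F u := by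
    have key := mul_sub_sq_mul_abs_rpow_le (p := q - 1) (by linarith) (u - y) (-y)
    rw [signedRpow_neg, sub_neg_eq_add, sub_add_cancel] at key
    have hq1 : q - 1 ≠ 0 := by linarith
    have hq2 : 2 * q - 2 ≠ 0 := by linarith
    rw [(hderiv u).deriv, show u * _ = q / (2 * q - 2) * ((2 * (q - 1) - 1) * (u *
        (signedRpow (q - 1) (u - y) + signedRpow (q - 1) y))
        - (q - 1) * u ^ 2 * |u - y| ^ (q - 1 - 1)) by rw [hγ]; field_simp; ring]
    exact mul_nonneg (div_nonneg (by linarith) (by linarith)) (by linarith)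
  have hdiff : Differentiable ℝ F := fun u => (hderiv u).differentiableAt
  refine ⟨⟨hdiff, hmul⟩, le_of_sub_mul_deriv_nonneg hdiff (by simpa using hmul), ?_⟩
  simp [hF]
end

section
/- Let C ⊆ ℝⁿ be a convex set and let x₁,…,xₚ be exposed points of C (for each i there is a linear functional ℓ with ℓ(xᵢ) > ℓ(z) for all z ∈ C with z ≠ xᵢ). For a set S ⊆ ℝⁿ and x ∈ S, let T(x; S) = {w ∈ ℝⁿ : x + λw ∈ S for some λ > 0} denote the cone of feasible directions. Then: (1) for every i ∈ [p], C ∩ (xᵢ − T(xᵢ; conv({x₁,…,xₚ}))) = {xᵢ}; and (2) for every y ∈ C with y ∉ conv({x₁,…,xₚ}), the matrix X with columns x₁,…,xₚ and the point y satisfy the vertex non-cover condition. -/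
noncomputable section

/-- The cone of feasible directions to `S` at `x`. -/
def fdCone {E : Type*} [AddCommGroup E] [Module ℝ E] (S : Set E) (x : E) : Set E :=
  {w | ∃ lam : ℝ, 0 < lam ∧ x + lam • w ∈ S}

/-! An exposing functional `ℓ` of `xᵢ` attains its maximum over `C` only at `xᵢ`. If `w` is a
feasible direction of `conv x` at `xᵢ` and `xᵢ - w ∈ C`, then `ℓ w ≤ 0` and `ℓ w ≥ 0`, so
`ℓ (xᵢ - w) = ℓ xᵢ` and `w = 0`. Being exposed in `C`, each `xᵢ` is extreme in every subset of `C`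
containing it, in particular in `conv (x ∪ {y})`; and `y` is extreme there since it lies outside
`conv x`. -/

open Set

section VectorSpace

variable {𝕜 E : Type*} [Field 𝕜] [LinearOrder 𝕜] [IsStrictOrderedRing 𝕜]
  [AddCommGroup E] [Module 𝕜 E]

theorem mem_extremePoints_convexHull_insert {s : Set E} {y : E} (hy : y ∉ convexHull 𝕜 s) :
    y ∈ (convexHull 𝕜 (insert y s)).extremePoints 𝕜 := by
  rcases s.eq_empty_or_nonempty with rfl | hs
  · simp
  refine ⟨subset_convexHull 𝕜 _ (mem_insert y s), ?_⟩
  rw [convexHull_insert hs]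
  rintro a ha b hb ⟨θ, η, hθ, hη, hθη, hab⟩
  rw [convexJoin_singleton_left] at ha hb
  obtain ⟨a', ha', α, α', -, hα', hαα', rfl⟩ := mem_iUnion₂.1 ha
  obtain ⟨b', hb', β, β', -, hβ', hββ', rfl⟩ := mem_iUnion₂.1 hb
  obtain rfl : α = 1 - α' := eq_sub_of_add_eq hαα'
  obtain rfl : β = 1 - β' := eq_sub_of_add_eq hββ'
  -- Cancelling `y` in `y = θ • a + η • b` writes a multiple of `y` through `a', b' ∈ conv s`;
  -- a positive multiple would put `y` in `conv s`.
  have hcomb : (θ * α' + η * β') • y = (θ * α') • a' + (η * β') • b' := by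
    linear_combination (norm := module) -hab + hθη • y
  have hu0 : 0 ≤ θ * α' := mul_nonneg hθ.le hα'
  have hv0 : 0 ≤ η * β' := mul_nonneg hη.le hβ'
  generalize hu : θ * α' = u at hcomb hu0 hv0
  generalize η * β' = v at hcomb hu0 hv0
  have huv : u + v = 0 := by
    by_contra huv
    refine hy ?_
    have := convex_iff_div.1 (convex_convexHull 𝕜 s) ha' hb' hu0 hv0
      ((add_nonneg hu0 hv0).lt_of_ne' huv)
    rwa [div_eq_inv_mul, div_eq_inv_mul, mul_smul, mul_smul, ← smul_add, ← hcomb,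
      inv_smul_smul₀ huv] at this
  have hα'0 : α' = 0 := by
    have : θ * α' = 0 := by linarith
    simpa [hθ.ne'] using this
  simp [hα'0]

end VectorSpace

section Exposed

variable {E : Type*} [AddCommGroup E] [Module ℝ E] [TopologicalSpace E]

theorem mem_exposedPoints_of_forall_lt {A : Set E} {v : E} (hv : v ∈ A) (ℓ : E →L[ℝ] ℝ)
    (h : ∀ u ∈ A, u ≠ v → ℓ u < ℓ v) : v ∈ A.exposedPoints ℝ := by
  refine ⟨hv, ℓ, fun u hu => ?_⟩
  rcases eq_or_ne u v with rfl | huv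
  · exact ⟨le_rfl, fun _ => rfl⟩
  · exact ⟨(h u hu huv).le, fun hle => absurd hle (h u hu huv).not_ge⟩

theorem inter_image_sub_fdCone_eq_singleton {C S : Set E} {v : E} (hv : v ∈ C.exposedPoints ℝ)
    (hSC : S ⊆ C) (hvS : v ∈ S) : C ∩ ((fun w => v - w) '' fdCone S v) = {v} := by
  refine Subset.antisymm ?_
    (singleton_subset_iff.2 ⟨hSC hvS, 0, ⟨1, one_pos, by simpa⟩, sub_zero v⟩)
  obtain ⟨-, ℓ, hℓ⟩ := hv
  rintro _ ⟨hzC, w, ⟨t, ht, hvtw⟩, rfl⟩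
  have h₁ := (hℓ _ hzC).1
  have h₂ := (hℓ _ (hSC hvtw)).1
  simp only [map_sub, map_add, map_smul, smul_eq_mul] at h₁ h₂
  have hw : ℓ w = 0 := by nlinarith
  exact (hℓ _ hzC).2 (by simp [hw])

theorem vertexNonCover_of_mem_exposedPoints {p : ℕ} {C : Set E} (hC : Convex ℝ C)
    {x : Fin p → E} (hx : ∀ i, x i ∈ C.exposedPoints ℝ) {y : E} (hyC : y ∈ C)
    (hy : y ∉ convexHull ℝ (range x)) : VertexNonCover x y := by
  refine ⟨fun i hyi => hy (hyi ▸ subset_convexHull ℝ _ (mem_range_self i)), ?_⟩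
  refine extremePoints_convexHull_subset.antisymm ?_
  rw [union_singleton]
  have hsub : convexHull ℝ (insert y (range x)) ⊆ C :=
    convexHull_min (insert_subset hyC (range_subset_iff.2 fun i => (hx i).1)) hC
  rintro _ (rfl | ⟨i, rfl⟩)
  · exact mem_extremePoints_convexHull_insert hy
  · exact inter_extremePoints_subset_extremePoints_of_subset hsub
      ⟨subset_convexHull ℝ _ (mem_insert_of_mem _ (mem_range_self i)),
        exposedPoints_subset_extremePoints (hx i)⟩

end Exposed

theorem stmt7 {n p : ℕ}
    (C : Set (EuclideanSpace ℝ (Fin n))) (hC : Convex ℝ C)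
    (x : Fin p → EuclideanSpace ℝ (Fin n)) (hxC : ∀ i, x i ∈ C)
    (hexp : ∀ i, ∃ ℓ : EuclideanSpace ℝ (Fin n) →L[ℝ] ℝ,
      ∀ z ∈ C, z ≠ x i → ℓ z < ℓ (x i)) :
    (∀ i, C ∩ ((fun w => x i - w) '' fdCone (convexHull ℝ (Set.range x)) (x i)) = {x i}) ∧
      (∀ y ∈ C, y ∉ convexHull ℝ (Set.range x) → VertexNonCover x y) := by
  have hexposed : ∀ i, x i ∈ C.exposedPoints ℝ := fun i =>
    let ⟨ℓ, hℓ⟩ := hexp i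
    mem_exposedPoints_of_forall_lt (hxC i) ℓ hℓ
  have hconv : convexHull ℝ (range x) ⊆ C := convexHull_min (range_subset_iff.2 hxC) hC
  exact ⟨fun i => inter_image_sub_fdCone_eq_singleton (hexposed i) hconv
      (subset_convexHull ℝ _ (mem_range_self i)),
    fun y hyC hy => vertexNonCover_of_mem_exposedPoints hC hexposed hyC hy⟩
end
end

section
/- Let X ∈ ℝ^{n×p} have columns x₁,…,xₚ and let y ∈ ℝⁿ be such that X and y satisfy the vertex non-cover condition. Then for every i ∈ [p] there is no θ > 0 with xᵢ + θ·(xᵢ − y) ∈ conv({x₁,…,xₚ}); equivalently, y ∉ xᵢ − T(xᵢ; conv({x₁,…,xₚ})), where T(x; S) = {w ∈ ℝⁿ : x + λw ∈ S for some λ > 0} is the cone of feasible directions. -/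
noncomputable section

/-! If `x + θ (x - y)` stayed in `conv X` for some `θ > 0`, then `x` would lie strictly inside
the segment from `y` to that point, both ends of which lie in `conv (X ∪ {y})`; so `x` could
not be an extreme point of `conv (X ∪ {y})` unless `y = x`. -/

section Extrapolation

variable {𝕜 E : Type*} [Field 𝕜] [LinearOrder 𝕜] [IsStrictOrderedRing 𝕜]
  [AddCommGroup E] [Module 𝕜 E]

theorem mem_openSegment_extrapolate (x y : E) {θ : 𝕜} (hθ : 0 < θ) :
    x ∈ openSegment 𝕜 y (x + θ • (x - y)) := by
  have hθ₁ : (0 : 𝕜) < 1 + θ := by linarith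
  refine ⟨θ / (1 + θ), 1 / (1 + θ), by positivity, by positivity, by field_simp; ring, ?_⟩
  match_scalars <;> field_simp; ring

theorem eq_of_mem_extremePoints_of_extrapolate_mem {A : Set E} {x y : E} {θ : 𝕜}
    (hx : x ∈ A.extremePoints 𝕜) (hy : y ∈ A) (hθ : 0 < θ) (hz : x + θ • (x - y) ∈ A) :
    y = x :=
  hx.2 hy hz (mem_openSegment_extrapolate x y hθ)

end Extrapolation

theorem stmt9 {n p : ℕ}
    (x : Fin p → EuclideanSpace ℝ (Fin n)) (y : EuclideanSpace ℝ (Fin n))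
    (hvnc : VertexNonCover x y) :
    ∀ i, ¬ ∃ θ : ℝ, 0 < θ ∧ x i + θ • (x i - y) ∈ convexHull ℝ (Set.range x) := by
  rintro i ⟨θ, hθ, hz⟩
  obtain ⟨hne, hext⟩ := hvnc
  have hxi : x i ∈ (convexHull ℝ (Set.range x ∪ {y})).extremePoints ℝ :=
    by rw [hext]; exact Or.inl ⟨i, rfl⟩
  have hy : y ∈ convexHull ℝ (Set.range x ∪ {y}) := subset_convexHull ℝ _ (Or.inr rfl)
  exact hne i <| eq_of_mem_extremePoints_of_extrapolate_mem hxi hy hθ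
    (convexHull_mono Set.subset_union_left hz)
end
end

section
/- Let X ∈ ℝ^{n×p} have columns x₁,…,xₚ and let y ∈ ℝⁿ be such that X and y satisfy the vertex non-cover condition, and let T = {Σ_{j=1}^p λⱼ·(xⱼ − y) : λⱼ ≥ 0}. If for some i ∈ [p] there is no θ > 0 with xᵢ + θ·(y − xᵢ) ∈ conv({x₁,…,xₚ}) (i.e., y ∉ xᵢ + T(xᵢ; conv({x₁,…,xₚ})), where T(x; S) = {w : x + λw ∈ S for some λ > 0}), then xᵢ − y generates an extreme ray of T. -/
open Finset

noncomputable section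

/-!
Split `x i - y = w₁ + w₂` with `wₖ = ∑ j, λₖ j • (x j - y)`, `λₖ ≥ 0`, and put `μ = λ₁ + λ₂`,
`m = ∑ j, μ j`. If `m > 1`, the point `m⁻¹ • ∑ j, μ j • x j` of `conv X` equals
`x i + (1 - m⁻¹) • (y - x i)`, which is excluded; so `m ≤ 1` and
`x i = ∑ j, μ j • x j + (1 - m) • y` is a convex combination of the `x j` and `y`. Since `x i` is
an extreme point of `conv (X ∪ {y})`, every `x j` with `μ j > 0` equals `x i`,
so each `wₖ` is `(∑ j, λₖ j) • (x i - y)`.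
-/

section

variable {E : Type*} [AddCommGroup E] [Module ℝ E] {ι : Type*}

theorem sum_smul_eq_sum_smul_of_ne_zero {R M : Type*} [Semiring R] [AddCommMonoid M] [Module R M]
    (s : Finset ι) (l : ι → R) (f : ι → M) {v : M} (h : ∀ j ∈ s, l j ≠ 0 → f j = v) :
    ∑ j ∈ s, l j • f j = (∑ j ∈ s, l j) • v := by
  rw [sum_smul]
  refine sum_congr rfl fun j hj => ?_
  by_cases hl : l j = 0
  · simp [hl]
  · rw [h j hj hl]

theorem eq_of_mem_extremePoints_of_sum_smul_sub_eq_zero {A : Set E} (hA : Convex ℝ A) {z : E}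
    (hz : z ∈ A.extremePoints ℝ) {s : Finset ι} {w : ι → ℝ} {P : ι → E}
    (hw : ∀ k ∈ s, 0 ≤ w k) (hP : ∀ k ∈ s, P k ∈ A) (hsum : ∑ k ∈ s, w k • (P k - z) = 0)
    {k : ι} (hk : k ∈ s) (hwk : 0 < w k) : P k = z := by
  classical
  by_contra hPk
  set t := s.filter (P · ≠ z)
  have hkt : k ∈ t := mem_filter.2 ⟨hk, hPk⟩
  have hwt : 0 < ∑ j ∈ t, w j :=
    sum_pos' (fun j hj => hw j (mem_filter.1 hj).1) ⟨k, hkt, hwk⟩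
  have hsum_t : ∑ j ∈ t, w j • (P j - z) = 0 := by
    rwa [sum_filter_of_ne (p := (P · ≠ z))
      fun j _ h hPj => h (by rw [hPj, sub_self, smul_zero])]
  have hcenter : t.centerMass w P = z := by
    simp only [smul_sub, sum_sub_distrib, ← sum_smul, sub_eq_zero] at hsum_t
    rw [Finset.centerMass, hsum_t, inv_smul_smul₀ hwt.ne']
  have hmem : t.centerMass w P ∈ convexHull ℝ (A \ {z}) :=
    t.centerMass_mem_convexHull (fun j hj => hw j (mem_filter.1 hj).1) hwt
      fun j hj => ⟨hP j (mem_filter.1 hj).1, (mem_filter.1 hj).2⟩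
  exact ((hA.mem_extremePoints_iff_mem_sdiff_convexHull_sdiff.1 hz).2 (hcenter ▸ hmem))

theorem eq_of_mem_extremePoints_of_sub_eq_sum {A : Set E} (hA : Convex ℝ A) {z y : E}
    (hz : z ∈ A.extremePoints ℝ) (hy : y ∈ A) {s : Finset ι} {μ : ι → ℝ} {P : ι → E}
    (hμ : ∀ k ∈ s, 0 ≤ μ k) (hμ1 : ∑ k ∈ s, μ k ≤ 1) (hP : ∀ k ∈ s, P k ∈ A)
    (heq : z - y = ∑ k ∈ s, μ k • (P k - y)) {k : ι} (hk : k ∈ s) (hμk : 0 < μ k) :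
    P k = z := by
  have hsum : (1 - ∑ k ∈ s, μ k) • (y - z) + ∑ k ∈ s, μ k • (P k - z) = 0 := by
    have : ∑ k ∈ s, μ k • (P k - z) = ∑ k ∈ s, μ k • (P k - y) + (∑ k ∈ s, μ k) • (y - z) := by
      rw [sum_smul, ← sum_add_distrib]
      exact sum_congr rfl fun k _ => by rw [← smul_add, sub_add_sub_cancel]
    rw [this, ← heq]
    module
  refine eq_of_mem_extremePoints_of_sum_smul_sub_eq_zero hA hz (s := s.insertNone)
    (w := fun o => o.elim (1 - ∑ k ∈ s, μ k) μ) (P := fun o => o.elim y P) ?_ ?_ ?_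
    (mem_insertNone.2 fun k' hk' => Option.some_injective _ hk' ▸ hk) hμk
  · rintro (_ | k) hk
    · exact sub_nonneg.2 hμ1
    · exact hμ k (mem_insertNone.1 hk k rfl)
  · rintro (_ | k) hk
    · exact hy
    · exact hP k (mem_insertNone.1 hk k rfl)
  · rwa [sum_insertNone]

theorem exists_pos_add_smul_sub_mem_convexHull {s : Finset ι} {μ : ι → ℝ} {P : ι → E}
    {v y : E} (hμ : ∀ k ∈ s, 0 ≤ μ k) (hμ1 : 1 < ∑ k ∈ s, μ k)
    (heq : v - y = ∑ k ∈ s, μ k • (P k - y)) :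
    ∃ θ : ℝ, 0 < θ ∧ v + θ • (y - v) ∈ convexHull ℝ (P '' s) := by
  set m := ∑ k ∈ s, μ k
  have hm : 0 < m := one_pos.trans hμ1
  refine ⟨1 - m⁻¹, sub_pos.2 (inv_lt_one_of_one_lt₀ hμ1), ?_⟩
  have hcenter : s.centerMass μ P = v + (1 - m⁻¹) • (y - v) := by
    have hv : ∑ k ∈ s, μ k • P k = v - y + m • y := by
      rw [heq, sum_smul, ← sum_add_distrib]
      exact sum_congr rfl fun k _ => by rw [← smul_add, sub_add_cancel]
    rw [Finset.centerMass, hv, smul_add, smul_smul, inv_mul_cancel₀ hm.ne']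
    module
  rw [← hcenter]
  exact s.centerMass_mem_convexHull hμ hm fun k hk => Set.mem_image_of_mem P hk

end

theorem stmt10 {n p : ℕ}
    (x : Fin p → EuclideanSpace ℝ (Fin n)) (y : EuclideanSpace ℝ (Fin n))
    (hvnc : VertexNonCover x y)
    (T : Set (EuclideanSpace ℝ (Fin n)))
    (hT : T = {v | ∃ lam : Fin p → ℝ, (∀ j, 0 ≤ lam j) ∧
      v = ∑ j, lam j • (x j - y)})
    (i : Fin p)
    (hi : ¬ ∃ θ : ℝ, 0 < θ ∧ x i + θ • (y - x i) ∈ convexHull ℝ (Set.range x)) :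
    GeneratesExtremeRay T (x i - y) := by
  subst hT
  obtain ⟨hne, hext⟩ := hvnc
  set A := convexHull ℝ (Set.range x ∪ {y})
  have hxA : ∀ j, x j ∈ A := fun j => subset_convexHull ℝ _ (Or.inl ⟨j, rfl⟩)
  have hxi : x i ∈ A.extremePoints ℝ := hext ▸ Or.inl ⟨i, rfl⟩
  refine ⟨sub_ne_zero.2 (hne i).symm, ⟨Pi.single i 1, ?_, ?_⟩, ?_⟩
  · exact (Pi.single_nonneg.2 zero_le_one : (0 : Fin p → ℝ) ≤ Pi.single i 1)
  · simp [Pi.single_apply, ite_smul]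
  rintro _ _ ⟨l₁, hl₁, rfl⟩ ⟨l₂, hl₂, rfl⟩ hsum
  have hμ : ∀ j, 0 ≤ l₁ j + l₂ j := fun j => add_nonneg (hl₁ j) (hl₂ j)
  have hμsum : x i - y = ∑ j, (l₁ j + l₂ j) • (x j - y) := by
    simp only [hsum, add_smul, sum_add_distrib]
  have hμ1 : ∑ j, (l₁ j + l₂ j) ≤ 1 := by
    by_contra! h
    exact hi (by simpa using exists_pos_add_smul_sub_mem_convexHull (fun j _ => hμ j) h hμsum)
  have hcollapse : ∀ j, 0 < l₁ j + l₂ j → x j = x i := fun j hj =>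
    eq_of_mem_extremePoints_of_sub_eq_sum (convex_convexHull ℝ _) hxi
      (subset_convexHull ℝ _ (Or.inr rfl)) (fun j _ => hμ j) hμ1 (fun j _ => hxA j) hμsum
      (mem_univ j) hj
  have hray : ∀ l : Fin p → ℝ, (∀ j, 0 ≤ l j) → (∀ j, l j ≤ l₁ j + l₂ j) →
      ∑ j, l j • (x j - y) = (∑ j, l j) • (x i - y) := fun l hl hlμ =>
    sum_smul_eq_sum_smul_of_ne_zero _ _ _ fun j _ hj => by
      rw [hcollapse j (((hl j).lt_of_ne' hj).trans_le (hlμ j))]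
  exact ⟨⟨_, sum_nonneg fun j _ => hl₁ j, hray l₁ hl₁ fun j => le_add_of_nonneg_right (hl₂ j)⟩,
    ⟨_, sum_nonneg fun j _ => hl₂ j, hray l₂ hl₂ fun j => le_add_of_nonneg_left (hl₁ j)⟩⟩
end
end

section
/- Let X ∈ ℝ^{n×p} have columns x₁,…,xₚ with 0 ∈ conv({x₁,…,xₚ}), let f : ℝⁿ → ℝ be any function, let η > 0, and let β* be a global minimizer of β ↦ f(Xβ) + η·Σ_{i=1}^p βᵢ over the nonnegative orthant {β ∈ ℝᵖ : βᵢ ≥ 0 for all i}. Then for every i ∈ [p] with xᵢ ≠ 0 and β*ᵢ > 0, the point xᵢ does not lie in the relative interior (intrinsic interior) of conv({x₁,…,xₚ}). -/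
/-!
If `xᵢ` lies in the relative interior of `C = conv{x₁, …, xₚ}` and `0 ∈ C`, then the ray from `0`
through `xᵢ` stays in `C` slightly beyond `xᵢ`: `t • xᵢ = ∑ λⱼ xⱼ` for some `t > 1` and convex
weights `λ`. Replacing the mass `βᵢ` on `xᵢ` by `(βᵢ / t) • λ` keeps `Xβ` and all weights
nonnegative while lowering `∑ βⱼ` by `βᵢ (1 - 1/t) > 0`, which contradicts minimality since `η > 0`.
-/

open Set Filter Topology Finset

theorem convexHull_range_eq_image_stdSimplex {𝕜 E ι : Type*} [Field 𝕜] [LinearOrder 𝕜]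
    [IsStrictOrderedRing 𝕜] [AddCommGroup E] [Module 𝕜 E] [Fintype ι] (v : ι → E) :
    convexHull 𝕜 (range v) = Fintype.linearCombination 𝕜 v '' stdSimplex 𝕜 ι := by
  classical
  rw [← convexHull_rangle_single_eq_stdSimplex, LinearMap.image_convexHull, ← range_comp]
  congr 2
  ext i
  simp

theorem eventually_smul_mem_of_mem_intrinsicInterior {E : Type*} [AddCommGroup E] [Module ℝ E]
    [TopologicalSpace E] [ContinuousSMul ℝ E] {s : Set E} {x : E}
    (h0 : (0 : E) ∈ affineSpan ℝ s) (hx : x ∈ intrinsicInterior ℝ s) :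
    ∀ᶠ t : ℝ in 𝓝 1, t • x ∈ s := by
  obtain ⟨y, hy, rfl⟩ := hx
  have hline : ∀ t : ℝ, t • (y : E) ∈ affineSpan ℝ s := fun t => by
    simpa using (affineSpan ℝ s).smul_vsub_vadd_mem t y.2 h0 h0
  let g : ℝ → affineSpan ℝ s := fun t => ⟨t • (y : E), hline t⟩
  have hg : Continuous g := (continuous_id.smul continuous_const).subtype_mk _
  have hg1 : g 1 = y := Subtype.ext (one_smul ℝ _)
  have : ∀ᶠ t in 𝓝 1, g t ∈ interior ((↑) ⁻¹' s) :=
    hg.continuousAt.preimage_mem_nhds (isOpen_interior.mem_nhds (hg1 ▸ hy))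
  exact this.mono fun t ht => (interior_subset ht : g t ∈ (↑) ⁻¹' s)

theorem exists_nonneg_sum_smul_eq_sum_lt {𝕜 E ι : Type*} [Field 𝕜] [LinearOrder 𝕜]
    [IsStrictOrderedRing 𝕜] [AddCommGroup E] [Module 𝕜 E] [Fintype ι] [DecidableEq ι]
    {v : ι → E} {β : ι → 𝕜} (hβ : ∀ j, 0 ≤ β j) {i : ι} (hβi : 0 < β i) {t : 𝕜} (ht : 1 < t)
    (hti : t • v i ∈ convexHull 𝕜 (range v)) :
    ∃ γ : ι → 𝕜, (∀ j, 0 ≤ γ j) ∧ ∑ j, γ j • v j = ∑ j, β j • v j ∧ ∑ j, γ j < ∑ j, β j := by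
  rw [convexHull_range_eq_image_stdSimplex] at hti
  obtain ⟨w, ⟨hw0, hw1⟩, hwv⟩ := hti
  have ht0 : 0 < t := zero_lt_one.trans ht
  refine ⟨β - Pi.single i (β i) + (β i / t) • w, fun j => ?_, ?_, ?_⟩
  · have : 0 ≤ β i / t * w j := mul_nonneg (div_pos hβi ht0).le (hw0 j)
    rcases eq_or_ne j i with rfl | hj
    · simpa
    · simpa [hj] using add_nonneg (hβ j) this
  · simp only [← Fintype.linearCombination_apply, map_add, map_sub, map_smul, hwv,
      Fintype.linearCombination_apply_single, smul_smul, div_mul_cancel₀ _ ht0.ne', sub_add_cancel]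
  · simp only [Pi.add_apply, Pi.sub_apply, Pi.smul_apply, smul_eq_mul, sum_add_distrib,
      sum_sub_distrib, ← mul_sum, hw1, mul_one, Fintype.sum_pi_single']
    linarith [div_lt_self hβi ht]

theorem stmt12 {n p : ℕ}
    (x : Fin p → EuclideanSpace ℝ (Fin n))
    (h0 : (0 : EuclideanSpace ℝ (Fin n)) ∈ convexHull ℝ (Set.range x))
    (f : EuclideanSpace ℝ (Fin n) → ℝ)
    (η : ℝ) (hη : 0 < η)
    (β : Fin p → ℝ) (hβ : ∀ i, 0 ≤ β i)
    (hmin : ∀ γ : Fin p → ℝ, (∀ i, 0 ≤ γ i) →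
      f (∑ i, β i • x i) + η * ∑ i, β i ≤ f (∑ i, γ i • x i) + η * ∑ i, γ i) :
    ∀ i, x i ≠ 0 → 0 < β i →
      x i ∉ intrinsicInterior ℝ (convexHull ℝ (Set.range x)) := by
  intro i _ hβi hint
  have hscale := eventually_smul_mem_of_mem_intrinsicInterior
    (subset_affineSpan ℝ _ h0) hint
  obtain ⟨t, hti, ht⟩ := (hscale.filter_mono nhdsWithin_le_nhds).and self_mem_nhdsWithin
    |>.exists (f := 𝓝[>] (1 : ℝ))
  obtain ⟨γ, hγ, hγx, hγβ⟩ := exists_nonneg_sum_smul_eq_sum_lt hβ hβi ht hti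
  have hle := hmin γ hγ
  rw [hγx] at hle
  linarith [mul_lt_mul_of_pos_left hγβ hη]
end

section
/- Let x₁,…,xₚ ∈ ℝⁿ, let X ∈ ℝ^{n×p} be the matrix with these columns, and suppose K := conv({x₁,…,xₚ}) admits a facet description K = ⋂_{i=1}^m {z ∈ ℝⁿ : ⟨hᵢ, z⟩ ≤ bᵢ} with h₁,…,h_m ∈ ℝⁿ nonzero and b₁,…,b_m ∈ ℝ. Let y ∈ ℝⁿ be nonzero, and let β* be a global minimizer of β ↦ Σ_{i=1}^p βᵢ over the feasible set {β ∈ ℝᵖ : βᵢ ≥ 0 for all i, Xβ = y}, assumed nonempty. Then for every j ∈ [p] with β*ⱼ > 0 and every i ∈ J(y), one has ⟨hᵢ, xⱼ⟩ = bᵢ; that is, xⱼ ∈ F(y) := K ∩ {z : ⟨hᵢ, z⟩ = bᵢ for all i ∈ J(y)}. -/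
open Finset RealInnerProductSpace Pointwise

noncomputable section

lemma mem_hull_rep {n p : ℕ} (x : Fin p → EuclideanSpace ℝ (Fin n))
    (z : EuclideanSpace ℝ (Fin n)) (hz : z ∈ convexHull ℝ (Set.range x)) :
    ∃ γ : Fin p → ℝ, (∀ i, 0 ≤ γ i) ∧ ∑ i, γ i = 1 ∧ ∑ i, γ i • x i = z := by
  rw [convexHull_range_eq_exists_affineCombination] at hz
  obtain ⟨s, w, hw0, hw1, hwz⟩ := hz
  refine ⟨fun i => if i ∈ s then w i else 0, ?_, ?_, ?_⟩
  · intro i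
    by_cases hi : i ∈ s
    · simpa [hi] using hw0 i hi
    · simp [hi]
  · rw [Finset.sum_ite_mem, Finset.univ_inter, hw1]
  · rw [affineCombination_eq_linear_combination s x w hw1] at hwz
    rw [← hwz]
    rw [← Finset.sum_subset (Finset.subset_univ s)]
    · exact Finset.sum_congr rfl fun i hi => by simp [hi]
    · intro i _ hi; simp [hi]

theorem stmt13 {n p m : ℕ}
    (x : Fin p → EuclideanSpace ℝ (Fin n))
    (h : Fin m → EuclideanSpace ℝ (Fin n)) (b : Fin m → ℝ)
    (hh : ∀ i, h i ≠ 0)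
    (hfacet : convexHull ℝ (Set.range x) =
      ⋂ i, {z : EuclideanSpace ℝ (Fin n) | ⟪h i, z⟫ ≤ b i})
    (y : EuclideanSpace ℝ (Fin n)) (hy : y ≠ 0)
    (β : Fin p → ℝ) (hβ : ∀ i, 0 ≤ β i) (hXβ : ∑ i, β i • x i = y)
    (hmin : ∀ γ : Fin p → ℝ, (∀ i, 0 ≤ γ i) → ∑ i, γ i • x i = y →
      ∑ i, β i ≤ ∑ i, γ i) :
    ∀ j, 0 < β j → ∀ i : Fin m,
      ⟪h i, y⟫ = b i * gauge (convexHull ℝ (Set.range x)) y →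
      ⟪h i, x j⟫ = b i := by
  set K := convexHull ℝ (Set.range x) with hK
  set s := ∑ i, β i with hs
  have hs0 : 0 < s := by
    rcases (Finset.sum_nonneg fun i _ => hβ i).lt_or_eq with h' | h'
    · exact h'
    · exfalso; apply hy
      have : ∀ i ∈ Finset.univ, β i = 0 :=
        (Finset.sum_eq_zero_iff_of_nonneg (fun i _ => hβ i)).1 h'.symm
      rw [← hXβ]
      exact Finset.sum_eq_zero fun i hi => by rw [this i hi, zero_smul]
  -- y ∈ s • K
  have hmemK : s⁻¹ • y ∈ K := by
    rw [← hXβ, Finset.smul_sum]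
    have := Finset.centerMass_mem_convexHull (Finset.univ : Finset (Fin p))
      (fun i _ => hβ i) (by rwa [← hs]) (fun i _ => Set.mem_range_self (f := x) i)
    rw [Finset.centerMass, ← hs] at this
    simpa [mul_smul, Finset.smul_sum] using this
  have hyK : y ∈ s • K := ⟨s⁻¹ • y, hmemK, by
    show s • s⁻¹ • y = y
    rw [smul_smul, mul_inv_cancel₀ hs0.ne', one_smul]⟩
  -- gauge K y ≤ s
  have hle : gauge K y ≤ s := gauge_le_of_mem hs0.le hyK
  -- s ≤ gauge K y
  have hge : s ≤ gauge K y := by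
    rw [gauge]
    refine le_csInf ⟨s, hs0, hyK⟩ ?_
    rintro r ⟨hr0, hr⟩
    rw [Set.mem_smul_set] at hr
    obtain ⟨w, hw, hrw⟩ := hr
    obtain ⟨γ, hγ0, hγ1, hγx⟩ := mem_hull_rep x w hw
    have : ∑ i, (r * γ i) • x i = y := by
      rw [← hrw, ← hγx, Finset.smul_sum]
      exact Finset.sum_congr rfl fun i _ => (smul_smul r (γ i) (x i)).symm
    calc s ≤ ∑ i, r * γ i := hmin _ (fun i => mul_nonneg hr0.le (hγ0 i)) this
      _ = r := by rw [← Finset.mul_sum, hγ1, mul_one]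
  have hgauge : gauge K y = s := le_antisymm hle hge
  intro j hj i hi
  rw [hgauge] at hi
  -- each x k satisfies ⟪h i, x k⟫ ≤ b i
  have hxk : ∀ k, ⟪h i, x k⟫ ≤ b i := fun k => by
    have : x k ∈ K := subset_convexHull ℝ _ (Set.mem_range_self k)
    rw [hfacet] at this
    exact Set.mem_iInter.1 this i
  have hsum : ∑ k, β k * (b i - ⟪h i, x k⟫) = 0 := by
    have hinner : ⟪h i, y⟫ = ∑ k, β k * ⟪h i, x k⟫ := by
      rw [← hXβ, inner_sum]
      exact Finset.sum_congr rfl fun k _ => real_inner_smul_right _ _ _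
    have : ∑ k, β k * (b i - ⟪h i, x k⟫)
        = s * b i - ⟪h i, y⟫ := by
      rw [hinner, hs, Finset.sum_mul, ← Finset.sum_sub_distrib]
      exact Finset.sum_congr rfl fun k _ => by ring
    rw [this, hi]; ring
  have hterm : β j * (b i - ⟪h i, x j⟫) = 0 := by
    have := (Finset.sum_eq_zero_iff_of_nonneg
      (fun k _ => mul_nonneg (hβ k) (sub_nonneg.2 (hxk k)))).1 hsum j (Finset.mem_univ j)
    exact this
  have := mul_eq_zero.1 hterm
  rcases this with h' | h'
  · exact absurd h' hj.ne'
  · linarith [sub_eq_zero.1 h']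
end
end

section
/- Let X ∈ ℝ^{n×p} have columns x₁,…,xₚ, let y ∈ ℝⁿ be nonzero with {β ∈ ℝᵖ : βᵢ ≥ 0 for all i, Xβ = y} nonempty, and let α > 0 satisfy α·ξ(y; conv({x₁,…,xₚ})) > 1, where ξ(z; S) = inf{λ > 0 : z ∈ λ·S} is the gauge. Assume X and αy satisfy the vertex non-cover condition, and let T = {Σ_{i=1}^p λᵢ·(xᵢ − αy) : λᵢ ≥ 0}. Then for every global minimizer β* of β ↦ Σ_{i=1}^p βᵢ over {β ∈ ℝᵖ : βᵢ ≥ 0 for all i, Xβ = y} and every i ∈ [p] with β*ᵢ > 0, the vector xᵢ − αy generates an extreme ray of T. -/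
/-!
Write `x i - α • y = ∑ ν j • (x j - α • y)` with `ν ≥ 0` and let `t = ∑ ν j`. If `t ≤ 1`, this
exhibits `x i` as a convex combination of the columns and `α • y`; as `x i` is a vertex of their
hull, every column with positive weight equals `x i`, so each of the two summands is a multiple
of `x i - α • y`. If `t > 1`, then `x i + α (t - 1) • y = ∑ ν j • x j`; substituting this for `x i`
in `y = ∑ β j • x j` yields a nonnegative representation of `y` of cost below `∑ β j`, because
`α ∑ β j ≥ α ξ(y) > 1`. This contradicts the minimality of `β`.
-/

open Finset

noncomputable section

theorem gauge_convexHull_range_le_sum {E ι : Type*} [AddCommGroup E] [Module ℝ E] [Fintype ι]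
    (x : ι → E) {β : ι → ℝ} (hβ : ∀ j, 0 ≤ β j) :
    gauge (convexHull ℝ (Set.range x)) (∑ j, β j • x j) ≤ ∑ j, β j := by
  rcases (sum_nonneg fun j _ => hβ j).eq_or_lt with h | h
  · have hβ0 : ∀ j, β j = 0 := fun j =>
      (sum_eq_zero_iff_of_nonneg fun j _ => hβ j).1 h.symm j (mem_univ j)
    simp [hβ0]
  · refine gauge_le_of_mem h.le ⟨univ.centerMass β x, ?_, ?_⟩
    · exact univ.centerMass_mem_convexHull (fun j _ => hβ j) h fun j _ => Set.mem_range_self j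
    · exact smul_inv_smul₀ h.ne' _

section ConvexCombination

variable {𝕜 E ι : Type*} [Field 𝕜] [LinearOrder 𝕜] [IsStrictOrderedRing 𝕜]
  [AddCommGroup E] [Module 𝕜 E] [Fintype ι]

theorem Convex.eq_of_mem_extremePoints_of_sum_smul_eq {A : Set E} (hA : Convex 𝕜 A) {e : E}
    (he : e ∈ A.extremePoints 𝕜) {w : ι → 𝕜} {z : ι → E} (hw : ∀ j, 0 ≤ w j)
    (hw₁ : ∑ j, w j = 1) (hz : ∀ j, z j ∈ A) (hsum : ∑ j, w j • z j = e) {k : ι}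
    (hk : 0 < w k) : z k = e := by
  classical
  -- The points other than `e` would have a centre of mass in the convex set `A \ {e}`,
  -- but the weighted sum forces that centre of mass to be `e`.
  by_contra hne
  set t := univ.filter fun j => z j ≠ e
  have hW : 0 < ∑ j ∈ t, w j := sum_pos' (fun j _ => hw j) ⟨k, by simp [t, hne], hk⟩
  have hc : t.centerMass w z ∈ A \ {e} :=
    ((hA.mem_extremePoints_iff_convex_sdiff).1 he).2.centerMass_mem (fun j _ => hw j) hW
      fun j hj => ⟨hz j, (mem_filter.1 hj).2⟩
  have hrest : ∑ j ∈ univ.filter (fun j => ¬z j ≠ e), w j • z j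
      = (1 - ∑ j ∈ t, w j) • e := by
    rw [← hw₁, ← sum_filter_add_sum_filter_not univ (fun j => z j ≠ e) w, add_sub_cancel_left,
      sum_smul]
    exact sum_congr rfl fun j hj => by rw [not_not.1 (mem_filter.1 hj).2]
  have hcW : (∑ j ∈ t, w j) • t.centerMass w z = (∑ j ∈ t, w j) • e := by
    rw [centerMass, smul_inv_smul₀ hW.ne']
    have := sum_filter_add_sum_filter_not univ (fun j => z j ≠ e) (fun j => w j • z j)
    rw [hsum, hrest] at this
    linear_combination (norm := module) this
  exact hc.2 (smul_right_injective E hW.ne' hcW)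

theorem eq_of_mem_extremePoints_convexHull_union {x : ι → E} {v e : E}
    (he : e ∈ (convexHull 𝕜 (Set.range x ∪ {v})).extremePoints 𝕜) {ν : ι → 𝕜}
    (hν : ∀ j, 0 ≤ ν j) (hν₁ : ∑ j, ν j ≤ 1)
    (hsum : ∑ j, ν j • x j + (1 - ∑ j, ν j) • v = e) {k : ι} (hk : 0 < ν k) : x k = e :=
  (convex_convexHull 𝕜 _).eq_of_mem_extremePoints_of_sum_smul_eq he
    (w := fun o : Option ι => o.elim (1 - ∑ j, ν j) ν) (z := fun o => o.elim v x)
    (k := some k) (by rintro (_ | j) <;> simp [hν₁, hν]) (by simp [Fintype.sum_option])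
    (by rintro (_ | j) <;> apply subset_convexHull <;> simp)
    (by simpa [Fintype.sum_option, add_comm] using hsum) hk

-- Substitute `x i = ∑ ν j • x j - d • y` into `y = ∑ β j • x j` and solve for `y`.
theorem exists_nonneg_sum_smul_eq_and_sum_lt [DecidableEq ι] {x : ι → E} {y : E} {β ν : ι → 𝕜} {d : 𝕜} {i : ι}
    (hβ : ∀ j, 0 ≤ β j) (hν : ∀ j, 0 ≤ ν j) (hd : 0 ≤ d) (hβi : 0 < β i)
    (hβx : ∑ j, β j • x j = y) (hx : x i + d • y = ∑ j, ν j • x j)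
    (hlt : ∑ j, ν j - 1 < d * ∑ j, β j) :
    ∃ γ : ι → 𝕜, (∀ j, 0 ≤ γ j) ∧ ∑ j, γ j • x j = y ∧ ∑ j, γ j < ∑ j, β j := by
  have hc : 0 < 1 + β i * d := by positivity
  refine ⟨fun j => (1 + β i * d)⁻¹ * (β j + β i * ν j - if j = i then β i else 0), ?_, ?_, ?_⟩
  · intro j
    refine mul_nonneg (inv_nonneg.2 hc.le) ?_
    split_ifs with hj
    · subst hj; nlinarith [hν j]
    · have := mul_nonneg hβi.le (hν j); linarith [hβ j]
  · simp only [mul_smul, sub_smul, add_smul, ite_smul, zero_smul, ← smul_sum, sum_sub_distrib,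
      sum_add_distrib, sum_ite_eq', mem_univ, if_true, hβx, ← hx]
    rw [inv_smul_eq_iff₀ hc.ne']
    module
  · simp only [← mul_sum, sum_sub_distrib, sum_add_distrib, sum_ite_eq', mem_univ, if_true]
    rw [inv_mul_lt_iff₀ hc]
    nlinarith

end ConvexCombination

theorem sum_smul_sub_eq_smul_sub {R E ι : Type*} [Ring R] [AddCommGroup E] [Module R E]
    [Fintype ι] {c : ι → R} {x : ι → E} {e v : E} (h : ∀ j, c j ≠ 0 → x j = e) :
    ∑ j, c j • (x j - v) = (∑ j, c j) • (e - v) := by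
  rw [sum_smul]
  refine sum_congr rfl fun j _ => ?_
  by_cases hj : c j = 0
  · simp [hj]
  · rw [h j hj]

theorem stmt14_general {n p : ℕ}
    (x : Fin p → EuclideanSpace ℝ (Fin n)) (y : EuclideanSpace ℝ (Fin n))
    (α : ℝ) (hα : 0 < α)
    (hαξ : 1 < α * gauge (convexHull ℝ (Set.range x)) y)
    (hvnc : VertexNonCover x (α • y))
    (T : Set (EuclideanSpace ℝ (Fin n)))
    (hT : T = {v | ∃ lam : Fin p → ℝ, (∀ i, 0 ≤ lam i) ∧
      v = ∑ i, lam i • (x i - α • y)})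
    (β : Fin p → ℝ) (hβ : ∀ i, 0 ≤ β i) (hXβ : ∑ i, β i • x i = y)
    (hmin : ∀ γ : Fin p → ℝ, (∀ i, 0 ≤ γ i) → ∑ i, γ i • x i = y →
      ∑ i, β i ≤ ∑ i, γ i) :
    ∀ i, 0 < β i → GeneratesExtremeRay T (x i - α • y) := by
  intro i hβi
  subst hT
  refine ⟨sub_ne_zero.2 (hvnc.1 i).symm,
    ⟨Pi.single i 1, fun j => by simp [Pi.single_apply]; positivity, by simp⟩, ?_⟩
  rintro _ _ ⟨lam, hlam, rfl⟩ ⟨mu, hmu, rfl⟩ hsplit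
  set ν := lam + mu
  have hν : ∀ j, 0 ≤ ν j := fun j => add_nonneg (hlam j) (hmu j)
  have hrep : x i - α • y = ∑ j, ν j • x j - (∑ j, ν j) • α • y := by
    rw [hsplit, ← sum_add_distrib, sum_smul, ← sum_sub_distrib]
    exact sum_congr rfl fun j _ => by simp only [ν, Pi.add_apply]; module
  rcases le_or_gt (∑ j, ν j) 1 with ht | ht
  · have hext : x i ∈ (convexHull ℝ (Set.range x ∪ {α • y})).extremePoints ℝ := by
      rw [hvnc.2]; exact Or.inl ⟨i, rfl⟩
    have hx : ∀ j, 0 < ν j → x j = x i := fun j hj =>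
      eq_of_mem_extremePoints_convexHull_union hext hν ht
        (by linear_combination (norm := module) -hrep) hj
    have hx' : ∀ c : Fin p → ℝ, (∀ j, 0 ≤ c j) → (∀ j, c j ≤ ν j) →
        ∑ j, c j • (x j - α • y) = (∑ j, c j) • (x i - α • y) := fun c hc hcν =>
      sum_smul_sub_eq_smul_sub fun j hj => hx j (((hc j).lt_of_ne' hj).trans_le (hcν j))
    exact ⟨⟨_, sum_nonneg fun j _ => hlam j, hx' lam hlam fun j => le_add_of_nonneg_right (hmu j)⟩,
      ⟨_, sum_nonneg fun j _ => hmu j, hx' mu hmu fun j => le_add_of_nonneg_left (hlam j)⟩⟩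
  · have hαs : 1 < α * ∑ j, β j := hαξ.trans_le <|
      mul_le_mul_of_nonneg_left (hXβ ▸ gauge_convexHull_range_le_sum x hβ) hα.le
    obtain ⟨γ, hγ, hγx, hγβ⟩ := exists_nonneg_sum_smul_eq_and_sum_lt hβ hν
      (by nlinarith : 0 ≤ α * (∑ j, ν j - 1)) hβi hXβ
      (by linear_combination (norm := module) hrep) (by nlinarith)
    exact absurd (hmin γ hγ hγx) hγβ.not_ge

theorem stmt14 {n p : ℕ}
    (x : Fin p → EuclideanSpace ℝ (Fin n)) (y : EuclideanSpace ℝ (Fin n))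
    (hy : y ≠ 0)
    (α : ℝ) (hα : 0 < α)
    (hαξ : 1 < α * gauge (convexHull ℝ (Set.range x)) y)
    (hvnc : VertexNonCover x (α • y))
    (T : Set (EuclideanSpace ℝ (Fin n)))
    (hT : T = {v | ∃ lam : Fin p → ℝ, (∀ i, 0 ≤ lam i) ∧
      v = ∑ i, lam i • (x i - α • y)})
    (β : Fin p → ℝ) (hβ : ∀ i, 0 ≤ β i) (hXβ : ∑ i, β i • x i = y)
    (hmin : ∀ γ : Fin p → ℝ, (∀ i, 0 ≤ γ i) → ∑ i, γ i • x i = y →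
      ∑ i, β i ≤ ∑ i, γ i) :
    ∀ i, 0 < β i → GeneratesExtremeRay T (x i - α • y) :=
  stmt14_general x y α hα hαξ hvnc T hT β hβ hXβ hmin
end
end

section
/- Let K ⊆ ℝⁿ be a nonempty compact convex set with facet description K = ⋂_{i=1}^m {z ∈ ℝⁿ : ⟨hᵢ, z⟩ ≤ bᵢ}, where h₁,…,h_m ∈ ℝⁿ are nonzero and b₁,…,b_m ∈ ℝ, and let y ∈ ℝⁿ be nonzero with y ∈ pos(K). Then: (a) J(y) ≠ ∅; (b) J₁(y) ≠ ∅; (c) 0 ∉ F(y), where F(y) = K ∩ {z : ⟨hᵢ, z⟩ = bᵢ for all i ∈ J(y)}; and (d) every extreme point of F(y) belongs to ℳ(y) = {x : x is an extreme point of K and ⟨hᵢ, x⟩ = bᵢ for some i ∈ J₁(y)}. -/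
/-!
Compactness makes the gauge attained and positive: `ξ = gauge K y` is the least `r > 0` with
`⟪hᵢ, y⟫ ≤ bᵢ r` for all `i`. If every constraint tight at `ξ` had `bᵢ = 0`, it would stay tight
for all `r`, while the finitely many slack ones survive a small decrease of `r`; this contradicts
minimality. So some active `i` has `bᵢ ≠ 0`, which gives (a), (b), and (c) as `⟪hᵢ, 0⟫ = 0`.
Finally `F(y)` cuts `K` by supporting hyperplanes, so it is an extreme subset of `K`; its extreme
points are extreme points of `K`, and they lie on the facet of that `i`.
-/

open Finset RealInnerProductSpace Pointwise

noncomputable section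

/-- The active index set `J(y)` of the facet description `⟨hᵢ, ·⟩ ≤ bᵢ` of `K` at `y`. -/
def activeJ {n m : ℕ} (h : Fin m → EuclideanSpace ℝ (Fin n)) (b : Fin m → ℝ)
    (K : Set (EuclideanSpace ℝ (Fin n))) (y : EuclideanSpace ℝ (Fin n)) : Set (Fin m) :=
  {i | ⟪h i, y⟫ = b i * gauge K y}

/-- `J₁(y)`: active indices with `bᵢ ≠ 0`. -/
def activeJ1 {n m : ℕ} (h : Fin m → EuclideanSpace ℝ (Fin n)) (b : Fin m → ℝ)
    (K : Set (EuclideanSpace ℝ (Fin n))) (y : EuclideanSpace ℝ (Fin n)) : Set (Fin m) :=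
  {i | i ∈ activeJ h b K y ∧ b i ≠ 0}

/-- The face `F(y) = K ∩ {z : ⟨hᵢ, z⟩ = bᵢ for all i ∈ J(y)}`. -/
def faceF {n m : ℕ} (h : Fin m → EuclideanSpace ℝ (Fin n)) (b : Fin m → ℝ)
    (K : Set (EuclideanSpace ℝ (Fin n))) (y : EuclideanSpace ℝ (Fin n)) :
    Set (EuclideanSpace ℝ (Fin n)) :=
  K ∩ {z | ∀ i ∈ activeJ h b K y, ⟪h i, z⟫ = b i}

/-- `ℳ(y)`: extreme points of `K` lying on a facet indexed by `J₁(y)`. -/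
def facetVerM {n m : ℕ} (h : Fin m → EuclideanSpace ℝ (Fin n)) (b : Fin m → ℝ)
    (K : Set (EuclideanSpace ℝ (Fin n))) (y : EuclideanSpace ℝ (Fin n)) :
    Set (EuclideanSpace ℝ (Fin n)) :=
  {z | z ∈ Set.extremePoints ℝ K ∧ ∃ i ∈ activeJ1 h b K y, ⟪h i, z⟫ = b i}

open Set Filter Topology Bornology

theorem isLeast_gauge_of_isClosed_of_isBounded {E : Type*} [NormedAddCommGroup E]
    [NormedSpace ℝ E] {K : Set E} {y : E} (hKc : IsClosed K) (hKb : IsBounded K) (hy : y ≠ 0)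
    (hpos : ∃ r : ℝ, 0 < r ∧ y ∈ r • K) :
    IsLeast {r : ℝ | 0 < r ∧ y ∈ r • K} (gauge K y) := by
  obtain ⟨R, hR, hKR⟩ := hKb.exists_pos_norm_le
  have hc : 0 < ‖y‖ / R := div_pos (norm_pos_iff.2 hy) hR
  have hS : {r : ℝ | 0 < r ∧ y ∈ r • K} = Ici (‖y‖ / R) ∩ (fun r : ℝ => r⁻¹ • y) ⁻¹' K := by
    ext r
    constructor
    · rintro ⟨hr, x, hx, rfl⟩
      refine ⟨?_, by simpa [inv_smul_smul₀ hr.ne'] using hx⟩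
      rw [Set.mem_Ici, div_le_iff₀ hR, norm_smul, Real.norm_of_nonneg hr.le]
      exact mul_le_mul_of_nonneg_left (hKR x hx) hr.le
    · rintro ⟨hcr, hr⟩
      have hr0 : 0 < r := hc.trans_le hcr
      exact ⟨hr0, (mem_smul_set_iff_inv_smul_mem₀ hr0.ne' _ _).2 hr⟩
  have hinv : ContinuousOn (fun r : ℝ => r⁻¹ • y) (Ici (‖y‖ / R)) :=
    (continuousOn_id.inv₀ fun r hr => (hc.trans_le hr).ne').smul continuousOn_const
  have hclosed : IsClosed {r : ℝ | 0 < r ∧ y ∈ r • K} :=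
    hS ▸ hinv.preimage_isClosed_of_isClosed isClosed_Ici hKc
  exact hclosed.isLeast_csInf hpos ⟨0, fun r hr => hr.1.le⟩

theorem setOf_mem_smul_iInter_inner_le {E ι : Type*} [NormedAddCommGroup E]
    [InnerProductSpace ℝ E] (h : ι → E) (b : ι → ℝ) (y : E) :
    {r : ℝ | 0 < r ∧ y ∈ r • ⋂ i, {z | ⟪h i, z⟫ ≤ b i}} =
      {r : ℝ | 0 < r ∧ ∀ i, ⟪h i, y⟫ ≤ b i * r} := by
  ext r
  refine and_congr_right fun hr => ?_
  simp only [mem_smul_set_iff_inv_smul_mem₀ hr.ne', mem_iInter, mem_ofPred_eq,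
    real_inner_smul_right, inv_mul_le_iff₀' hr]

theorem exists_eq_mul_ne_zero_of_isLeast {ι : Type*} [Finite ι] {c b : ι → ℝ} {ξ : ℝ}
    (hξ : IsLeast {r : ℝ | 0 < r ∧ ∀ i, c i ≤ b i * r} ξ) : ∃ i, c i = b i * ξ ∧ b i ≠ 0 := by
  obtain ⟨⟨hξpos, hle⟩, hmin⟩ := hξ
  by_contra! hnone
  have hconstraint : ∀ i, ∀ᶠ r in 𝓝[<] ξ, c i ≤ b i * r := by
    intro i
    rcases (hle i).lt_or_eq with hlt | heq
    · exact nhdsWithin_le_nhds <|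
        (((continuous_const_mul (b i)).tendsto ξ).eventually_const_lt hlt).mono fun _ => le_of_lt
    · have hb : b i = 0 := hnone i heq
      exact Eventually.of_forall fun r => by simp [heq, hb]
  obtain ⟨r, ⟨hr0, hrξ⟩, hr⟩ :=
    ((eventually_mem_set.2 (Ioo_mem_nhdsLT hξpos)).and (eventually_all.2 hconstraint)).exists
  exact (hmin ⟨hr0, hr⟩).not_gt hrξ

theorem isExtreme_inter_setOf_inner_eq {E ι : Type*} [NormedAddCommGroup E]
    [InnerProductSpace ℝ E] {K : Set E} {h : ι → E} {b : ι → ℝ} {J : Set ι}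
    (hK : ∀ x ∈ K, ∀ i ∈ J, ⟪h i, x⟫ ≤ b i) :
    IsExtreme ℝ K (K ∩ {z | ∀ i ∈ J, ⟪h i, z⟫ = b i}) := by
  refine ⟨inter_subset_left, ?_⟩
  rintro x₁ hx₁ x₂ hx₂ z ⟨-, hz⟩ ⟨a, c, ha, hc, hac, rfl⟩
  refine ⟨hx₁, fun i hi => ?_⟩
  have hsum := hz i hi
  rw [inner_add_right, real_inner_smul_right, real_inner_smul_right] at hsum
  have h₁ := hK x₁ hx₁ i hi
  have h₂ := mul_le_mul_of_nonneg_left (hK x₂ hx₂ i hi) hc.le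
  exact le_antisymm h₁ (le_of_mul_le_mul_left (by linear_combination h₂ - hsum + b i * hac) ha)

theorem stmt15_general {n m : ℕ}
    (K : Set (EuclideanSpace ℝ (Fin n)))
    (hKcomp : IsCompact K)
    (h : Fin m → EuclideanSpace ℝ (Fin n)) (b : Fin m → ℝ)
    (hfacet : K = ⋂ i, {z : EuclideanSpace ℝ (Fin n) | ⟪h i, z⟫ ≤ b i})
    (y : EuclideanSpace ℝ (Fin n)) (hy : y ≠ 0)
    (hypos : ∃ lam : ℝ, 0 < lam ∧ y ∈ lam • K) :
    (activeJ h b K y).Nonempty ∧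
      (activeJ1 h b K y).Nonempty ∧
      (0 : EuclideanSpace ℝ (Fin n)) ∉ faceF h b K y ∧
      Set.extremePoints ℝ (faceF h b K y) ⊆ facetVerM h b K y := by
  have hleast := isLeast_gauge_of_isClosed_of_isBounded hKcomp.isClosed hKcomp.isBounded hy hypos
  nth_rw 1 [hfacet, setOf_mem_smul_iInter_inner_le] at hleast
  obtain ⟨i, hiJ, hbi⟩ := exists_eq_mul_ne_zero_of_isLeast hleast
  have hK : ∀ x ∈ K, ∀ i ∈ activeJ h b K y, ⟪h i, x⟫ ≤ b i := fun x hx i _ => by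
    rw [hfacet] at hx
    exact mem_iInter.1 hx i
  have hF : IsExtreme ℝ K (faceF h b K y) := isExtreme_inter_setOf_inner_eq hK
  refine ⟨⟨i, hiJ⟩, ⟨i, hiJ, hbi⟩, fun h0 => hbi ?_, fun z hz => ?_⟩
  · simpa using (h0.2 i hiJ).symm
  · exact ⟨hF.extremePoints_subset_extremePoints hz, i, ⟨hiJ, hbi⟩, hz.1.2 i hiJ⟩

theorem stmt15 {n m : ℕ}
    (K : Set (EuclideanSpace ℝ (Fin n)))
    (hKne : K.Nonempty) (hKcomp : IsCompact K) (hKconv : Convex ℝ K)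
    (h : Fin m → EuclideanSpace ℝ (Fin n)) (b : Fin m → ℝ)
    (hh : ∀ i, h i ≠ 0)
    (hfacet : K = ⋂ i, {z : EuclideanSpace ℝ (Fin n) | ⟪h i, z⟫ ≤ b i})
    (y : EuclideanSpace ℝ (Fin n)) (hy : y ≠ 0)
    (hypos : ∃ lam : ℝ, 0 < lam ∧ y ∈ lam • K) :
    (activeJ h b K y).Nonempty ∧
      (activeJ1 h b K y).Nonempty ∧
      (0 : EuclideanSpace ℝ (Fin n)) ∉ faceF h b K y ∧
      Set.extremePoints ℝ (faceF h b K y) ⊆ facetVerM h b K y :=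
  stmt15_general K hKcomp h b hfacet y hy hypos
end
end

section
/- Let K ⊆ ℝⁿ be a nonempty compact convex set with facet description K = ⋂_{i=1}^m {z ∈ ℝⁿ : ⟨hᵢ, z⟩ ≤ bᵢ}, where h₁,…,h_m ∈ ℝⁿ are nonzero and b₁,…,b_m ∈ ℝ, with 0 ∈ K, and let y ∈ ℝⁿ be nonzero with y ∈ pos(K). Define K∖y = ⋂_{i∉J(y)} {z : ⟨hᵢ, z⟩ ≤ bᵢ} and assume ξ(y; K∖y) < 1. Then: (1) every extreme point of K other than y/ξ(y) is an extreme point of conv(K ∪ {y}); and (2) if moreover y is not a positive scalar multiple of any extreme point of K and ξ(y) > 1, then the set of extreme points of conv(K ∪ {y}) equals the union of the set of extreme points of K with {y}. -/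
open Finset RealInnerProductSpace Pointwise

noncomputable section

/-- `K∖y`: the polyhedral set obtained by dropping the constraints active at `y`. -/
def dropK {n m : ℕ} (h : Fin m → EuclideanSpace ℝ (Fin n)) (b : Fin m → ℝ)
    (K : Set (EuclideanSpace ℝ (Fin n))) (y : EuclideanSpace ℝ (Fin n)) :
    Set (EuclideanSpace ℝ (Fin n)) :=
  {z | ∀ i, i ∉ activeJ h b K y → ⟪h i, z⟫ ≤ b i}

/-!
Put `y' = ξ(y)⁻¹ • y`. Since `ξ(y; K∖y) < 1` and `bᵢ ≥ 0`, every constraint that is not active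
at `y` holds strictly at `y`, while every active one is tight at `y'`. Let `z` be an extreme
point of `K` on a segment `[k, y]` with `k ∈ K` and `z ≠ k`. A constraint tight at `z` cannot be
strict at `y`, so it is tight at `y'`. From an extreme point of a polyhedron one cannot move in
a nonzero direction along which all its tight constraints stay tight, so `z = y'`. Hence every
other extreme point of `K` stays extreme in `conv(K ∪ {y})`, and the only possible new extreme
point is `y`, which is one as soon as `ξ(y) > 1`, i.e. `y ∉ K`.
-/

open Set Filter Topology

section ConvexHullInsert

variable {𝕜 E : Type*} [Field 𝕜] [LinearOrder 𝕜] [IsStrictOrderedRing 𝕜] [AddCommGroup E]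
  [Module 𝕜 E] {A K : Set E} {x y : E}

theorem mem_extremePoints_convexHull_of_notMem_convexHull_sdiff (hxA : x ∈ A)
    (hx : x ∉ convexHull 𝕜 (A \ {x})) : x ∈ (convexHull 𝕜 A).extremePoints 𝕜 := by
  rcases (A \ {x}).eq_empty_or_nonempty with hA | hA
  · have : A = {x} := Subset.antisymm (sdiff_eq_empty.1 hA) (singleton_subset_iff.2 hxA)
    simp [this]
  rw [← insert_sdiff_self_of_mem hxA, convexHull_insert hA]
  refine mem_extremePoints_iff_left.2 ⟨subset_convexJoin_left hA.convexHull (mem_singleton x), ?_⟩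
  rintro x₁ hx₁ x₂ hx₂ ⟨u, v, hu, hv, huv, hux⟩
  rw [convexJoin_singleton_left, mem_iUnion₂] at hx₁ hx₂
  obtain ⟨c₁, hc₁, p₁, q₁, hp₁, hq₁, hpq₁, rfl⟩ := hx₁
  obtain ⟨c₂, hc₂, p₂, q₂, hp₂, hq₂, hpq₂, rfl⟩ := hx₂
  -- otherwise `x = (u q₁ • c₁ + v q₂ • c₂) / (u q₁ + v q₂) ∈ convexHull 𝕜 (A \ {x})`
  have hσ : u * q₁ + v * q₂ = 0 := by
    refine ((eq_or_lt_of_le (by positivity)).resolve_right fun hσ => hx ?_).symm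
    convert convex_convexHull 𝕜 _ hc₁ hc₂ (by positivity : 0 ≤ u * q₁ / (u * q₁ + v * q₂))
      (by positivity : 0 ≤ v * q₂ / (u * q₁ + v * q₂)) (by field_simp) using 1
    apply smul_right_injective E hσ.ne'
    simp only [smul_add, smul_smul, mul_div_cancel₀ _ hσ.ne']
    linear_combination (norm := module) -hux + (u * hpq₁ + v * hpq₂ + huv) • x
  have hq₁ : q₁ = 0 := by
    refine (mul_eq_zero.1 ?_).resolve_left hu.ne'
    nlinarith [mul_nonneg hu.le hq₁, mul_nonneg hv.le hq₂]
  simp [hq₁, show p₁ = 1 by linarith]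

theorem mem_extremePoints_convexHull_insert_self (hK : Convex 𝕜 K) (hy : y ∉ K) :
    y ∈ (convexHull 𝕜 (insert y K)).extremePoints 𝕜 :=
  mem_extremePoints_convexHull_of_notMem_convexHull_sdiff (mem_insert y K) fun h =>
    hy (convexHull_min (sdiff_singleton_subset_iff.2 subset_rfl) hK h)

theorem mem_extremePoints_convexHull_insert_s17 (hK : Convex 𝕜 K) (hx : x ∈ K.extremePoints 𝕜)
    (hxy : x ≠ y) (hseg : ∀ k ∈ K, x ∈ segment 𝕜 k y → x = k) :
    x ∈ (convexHull 𝕜 (insert y K)).extremePoints 𝕜 := by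
  refine mem_extremePoints_convexHull_of_notMem_convexHull_sdiff (mem_insert_of_mem y hx.1) ?_
  rw [insert_sdiff_of_notMem K (show y ∉ {x} from hxy.symm)]
  rcases (K \ {x}).eq_empty_or_nonempty with hK' | hK'
  · simpa [hK'] using hxy
  rw [convexHull_insert hK', ((isExtreme_singleton.2 hx).convex_sdiff hK).convexHull_eq,
    convexJoin_singleton_left, mem_iUnion₂]
  rintro ⟨k, hk, hxk⟩
  exact hk.2 (hseg k hk.1 (segment_symm 𝕜 y k ▸ hxk)).symm

theorem extremePoints_convexHull_insert_subset :
    (convexHull 𝕜 (insert y K)).extremePoints 𝕜 ⊆ insert y (K.extremePoints 𝕜) := by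
  intro w hw
  rcases extremePoints_convexHull_subset hw with rfl | hwK
  · exact mem_insert w _
  · exact mem_insert_of_mem y <| inter_extremePoints_subset_extremePoints_of_subset
      ((subset_insert y K).trans (subset_convexHull 𝕜 _)) ⟨hwK, hw⟩

end ConvexHullInsert

section Polyhedron

variable {E ι : Type*} [NormedAddCommGroup E] [InnerProductSpace ℝ E]

def polyhedron (h : ι → E) (b : ι → ℝ) : Set E := ⋂ i, {x | ⟪h i, x⟫ ≤ b i}

variable {h : ι → E} {b : ι → ℝ} {x y w k : E}

theorem mem_polyhedron : x ∈ polyhedron h b ↔ ∀ i, ⟪h i, x⟫ ≤ b i := by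
  simp [polyhedron]

theorem eventually_add_smul_mem_polyhedron [Finite ι] (hx : x ∈ polyhedron h b)
    (hd : ∀ i, ⟪h i, x⟫ = b i → ⟪h i, y⟫ = 0) :
    ∀ᶠ t in 𝓝 (0 : ℝ), x + t • y ∈ polyhedron h b := by
  simp only [mem_polyhedron, inner_add_right, real_inner_smul_right] at hx ⊢
  refine eventually_all.2 fun i => ?_
  rcases (hx i).eq_or_lt with hi | hi
  · exact Eventually.of_forall fun t => by simp [hd i hi, hi]
  · have hlim : Tendsto (fun t : ℝ => ⟪h i, x⟫ + t * ⟪h i, y⟫) (𝓝 0) (𝓝 ⟪h i, x⟫) :=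
      (by fun_prop : Continuous fun t : ℝ => ⟪h i, x⟫ + t * ⟪h i, y⟫).tendsto' 0 _ (by simp)
    exact (hlim.eventually (gt_mem_nhds hi)).mono fun _ => le_of_lt

theorem eq_of_mem_extremePoints_polyhedron [Finite ι] (hx : x ∈ (polyhedron h b).extremePoints ℝ)
    (hy : ∀ i, ⟪h i, x⟫ = b i → ⟪h i, y⟫ = b i) : x = y := by
  have hev := eventually_add_smul_mem_polyhedron hx.1 (y := x - y) fun i hi => by
    rw [inner_sub_right, hi, hy i hi, sub_self]
  obtain ⟨t, ⟨hpos, hneg⟩, ht⟩ := (((hev.and ((continuous_neg.tendsto' 0 0 neg_zero).eventually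
    hev)).filter_mono nhdsWithin_le_nhds).and (self_mem_nhdsWithin : Ioi (0 : ℝ) ∈ 𝓝[>] 0)).exists
  have hmid : x ∈ openSegment ℝ (x + t • (x - y)) (x + (-t) • (x - y)) :=
    ⟨1 / 2, 1 / 2, by norm_num, by norm_num, by norm_num, by module⟩
  simpa [ht.ne', sub_eq_zero] using hx.2 hpos hneg hmid

theorem eq_or_eq_of_mem_extremePoints_polyhedron_of_mem_segment [Finite ι]
    (hx : x ∈ (polyhedron h b).extremePoints ℝ) (hk : k ∈ polyhedron h b)
    (hxk : x ∈ segment ℝ k y) (hw : ∀ i, b i ≤ ⟪h i, y⟫ → ⟪h i, w⟫ = b i) : x = k ∨ x = w := by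
  obtain ⟨a, t, ha, ht, hat, rfl⟩ := hxk
  rcases ht.eq_or_lt with rfl | ht
  · simp [show a = 1 by linarith]
  refine .inr <| eq_of_mem_extremePoints_polyhedron hx fun i hi => hw i <| not_lt.1 fun hyi => ?_
  have hki := mem_polyhedron.1 hk i
  rw [inner_add_right, real_inner_smul_right, real_inner_smul_right] at hi
  have hb : a * b i + t * b i = b i := by rw [← add_mul, hat, one_mul]
  linarith [mul_le_mul_of_nonneg_left hki ha, mul_lt_mul_of_pos_left hyi ht]

end Polyhedron

section Gauge

variable {E : Type*} [NormedAddCommGroup E] [NormedSpace ℝ E] {s : Set E} {x : E}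

theorem gauge_pos_of_isBounded (hs : Bornology.IsBounded s) (hx : x ≠ 0)
    (hne : ∃ r : ℝ, 0 < r ∧ x ∈ r • s) : 0 < gauge s x := by
  obtain ⟨R, hR, hsR⟩ := hs.subset_closedBall_lt 0 0
  refine (div_pos (norm_pos_iff.2 hx) hR).trans_le (le_csInf hne ?_)
  rintro r ⟨hr, k, hk, rfl⟩
  rw [norm_smul, Real.norm_of_nonneg hr.le, div_le_iff₀ hR]
  exact mul_le_mul_of_nonneg_left (mem_closedBall_zero_iff.1 (hsR hk)) hr.le

end Gauge

section ActiveConstraints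

variable {n m : ℕ} {K : Set (EuclideanSpace ℝ (Fin n))} {h : Fin m → EuclideanSpace ℝ (Fin n)}
  {b : Fin m → ℝ} {y : EuclideanSpace ℝ (Fin n)}

theorem inner_lt_of_notMem_activeJ (hb : ∀ i, 0 ≤ b i)
    (hne : ∃ r : ℝ, 0 < r ∧ y ∈ r • dropK h b K y) (hdrop : gauge (dropK h b K y) y < 1)
    {i : Fin m} (hi : i ∉ activeJ h b K y) : ⟪h i, y⟫ < b i := by
  obtain ⟨r, ⟨hr, hyr⟩, hr1⟩ := exists_lt_of_csInf_lt hne hdrop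
  have hle : ⟪h i, y⟫ ≤ r * b i := by
    have := (mem_smul_set_iff_inv_smul_mem₀ hr.ne' _ _).1 hyr i hi
    rwa [real_inner_smul_right, inv_mul_le_iff₀ hr] at this
  refine lt_of_le_of_ne (hle.trans (mul_le_of_le_one_left (hb i) hr1.le)) fun hyi => hi ?_
  have hbi : b i = 0 := by nlinarith [hb i]
  simp [activeJ, hyi, hbi]

theorem inner_inv_gauge_smul_eq_of_le (hb : ∀ i, 0 ≤ b i)
    (hne : ∃ r : ℝ, 0 < r ∧ y ∈ r • dropK h b K y) (hdrop : gauge (dropK h b K y) y < 1)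
    (hy : gauge K y ≠ 0) {i : Fin m} (hi : b i ≤ ⟪h i, y⟫) :
    ⟪h i, (gauge K y)⁻¹ • y⟫ = b i := by
  have hJ : i ∈ activeJ h b K y := by
    by_contra hJ
    exact hi.not_gt (inner_lt_of_notMem_activeJ hb hne hdrop hJ)
  rw [real_inner_smul_right, show ⟪h i, y⟫ = b i * gauge K y from hJ, mul_comm,
    mul_inv_cancel_right₀ hy]

end ActiveConstraints

theorem stmt17_general {n m : ℕ}
    (K : Set (EuclideanSpace ℝ (Fin n)))
    (hKcomp : IsCompact K) (hKconv : Convex ℝ K)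
    (h : Fin m → EuclideanSpace ℝ (Fin n)) (b : Fin m → ℝ)
    (hfacet : K = ⋂ i, {z : EuclideanSpace ℝ (Fin n) | ⟪h i, z⟫ ≤ b i})
    (h0K : (0 : EuclideanSpace ℝ (Fin n)) ∈ K)
    (y : EuclideanSpace ℝ (Fin n)) (hy : y ≠ 0)
    (hypos : ∃ lam : ℝ, 0 < lam ∧ y ∈ lam • K)
    (hdrop : gauge (dropK h b K y) y < 1) :
    (∀ z ∈ Set.extremePoints ℝ K, z ≠ (gauge K y)⁻¹ • y →
        z ∈ Set.extremePoints ℝ (convexHull ℝ (K ∪ {y}))) ∧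
      ((¬ ∃ c : ℝ, 0 < c ∧ ∃ z ∈ Set.extremePoints ℝ K, y = c • z) →
        1 < gauge K y →
        Set.extremePoints ℝ (convexHull ℝ (K ∪ {y})) =
          Set.extremePoints ℝ K ∪ {y}) := by
  change K = polyhedron h b at hfacet
  simp only [Set.union_singleton]
  have hξ : 0 < gauge K y := gauge_pos_of_isBounded hKcomp.isBounded hy hypos
  have hb : ∀ i, 0 ≤ b i := fun i =>
    (inner_zero_right (h i)).symm.trans_le (mem_polyhedron.1 (hfacet ▸ h0K) i)
  have hKdrop : K ⊆ dropK h b K y := fun z hz i _ => mem_polyhedron.1 (hfacet ▸ hz) i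
  have hne : ∃ r : ℝ, 0 < r ∧ y ∈ r • dropK h b K y :=
    hypos.imp fun r ⟨hr, hyr⟩ => ⟨hr, smul_set_mono hKdrop hyr⟩
  have hseg : ∀ z ∈ K.extremePoints ℝ, ∀ k ∈ K, z ∈ segment ℝ k y →
      z = k ∨ z = (gauge K y)⁻¹ • y := fun z hz k hk hzk =>
    eq_or_eq_of_mem_extremePoints_polyhedron_of_mem_segment (hfacet ▸ hz) (hfacet ▸ hk) hzk
      fun _ => inner_inv_gauge_smul_eq_of_le hb hne hdrop hξ.ne'
  have part1 : ∀ z ∈ K.extremePoints ℝ, z ≠ (gauge K y)⁻¹ • y →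
      z ∈ (convexHull ℝ (insert y K)).extremePoints ℝ := by
    intro z hz hzy'
    have hzy : z ≠ y := by
      rintro rfl
      exact (hseg z hz 0 h0K (right_mem_segment ℝ 0 z)).elim hy hzy'
    exact mem_extremePoints_convexHull_insert_s17 hKconv hz hzy fun k hk hzk =>
      (hseg z hz k hk hzk).resolve_right hzy'
  refine ⟨part1, fun hmult hξ1 => ?_⟩
  refine Subset.antisymm extremePoints_convexHull_insert_subset ?_
  rintro w (rfl | hw)
  · exact mem_extremePoints_convexHull_insert_self hKconv fun hwK =>
      hξ1.not_ge (gauge_le_one_of_mem hwK)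
  · refine part1 w hw fun hwy => hmult ⟨gauge K y, hξ, w, hw, ?_⟩
    rw [hwy, smul_inv_smul₀ hξ.ne']

theorem stmt17 {n m : ℕ}
    (K : Set (EuclideanSpace ℝ (Fin n)))
    (hKne : K.Nonempty) (hKcomp : IsCompact K) (hKconv : Convex ℝ K)
    (h : Fin m → EuclideanSpace ℝ (Fin n)) (b : Fin m → ℝ)
    (hh : ∀ i, h i ≠ 0)
    (hfacet : K = ⋂ i, {z : EuclideanSpace ℝ (Fin n) | ⟪h i, z⟫ ≤ b i})
    (h0K : (0 : EuclideanSpace ℝ (Fin n)) ∈ K)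
    (y : EuclideanSpace ℝ (Fin n)) (hy : y ≠ 0)
    (hypos : ∃ lam : ℝ, 0 < lam ∧ y ∈ lam • K)
    (hdrop : gauge (dropK h b K y) y < 1) :
    (∀ z ∈ Set.extremePoints ℝ K, z ≠ (gauge K y)⁻¹ • y →
        z ∈ Set.extremePoints ℝ (convexHull ℝ (K ∪ {y}))) ∧
      ((¬ ∃ c : ℝ, 0 < c ∧ ∃ z ∈ Set.extremePoints ℝ K, y = c • z) →
        1 < gauge K y →
        Set.extremePoints ℝ (convexHull ℝ (K ∪ {y})) =
          Set.extremePoints ℝ K ∪ {y}) :=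
  stmt17_general K hKcomp hKconv h b hfacet h0K y hy hypos hdrop
end
end
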